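/- arXiv:math/0204234 — 5 statements merged into one kernel-verified Lean document; each statement's English description precedes it below -/
import Mathlib

section
/- Let n ≥ 1 and k ≥ 1 be integers, let S ⊆ F^n be nonempty, and let A ≥ 1 be a real number such that for every η ∈ F^n the number of k-tuples (ξ₁,…,ξ_k) ∈ S^k with ξ₁ + ⋯ + ξ_k = η is at most A. Then for every g : S → ℂ one has ‖(g dσ)ˇ‖_{L^{2k}(F^n,dx)} ≤ A^{1/(2k)} · |F|^{n/(2k)} · |S|^{−1/2} · ‖g‖_{L^2(S,dσ)}. -/
open scoped BigOperators

/-- The extension operator `(g dσ)ˇ(x) = |S|⁻¹ ∑_{ξ ∈ S} g ξ ψ(x·ξ)`. -/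
noncomputable def extOp {F : Type*} [Field F] [Fintype F] {m : ℕ}
    (ψ : AddChar F ℂ) (S : Finset (Fin m → F)) (g : (Fin m → F) → ℂ) (x : Fin m → F) : ℂ :=
  (S.card : ℂ)⁻¹ * ∑ ξ ∈ S, g ξ * ψ (∑ i, x i * ξ i)

/-- `‖f‖_{L^q(F^m, dx)}` with counting measure. -/
noncomputable def ambNorm {F : Type*} [Fintype F] {m : ℕ} (q : ℝ) (f : (Fin m → F) → ℂ) : ℝ :=
  (∑ x : Fin m → F, ‖f x‖ ^ q) ^ (1 / q)

/-- `‖g‖_{L^p(S, dσ)}` with normalized counting measure on `S`. -/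
noncomputable def surfNorm {F : Type*} {m : ℕ} (p : ℝ) (S : Finset (Fin m → F))
    (g : (Fin m → F) → ℂ) : ℝ :=
  ((S.card : ℝ)⁻¹ * ∑ ξ ∈ S, ‖g ξ‖ ^ p) ^ (1 / p)

open Finset

lemma addChar_map_sum {A M : Type*} [AddCommMonoid A] [CommMonoid M] (ψ : AddChar A M)
    {ι : Type*} (s : Finset ι) (f : ι → A) :
    ψ (∑ i ∈ s, f i) = ∏ i ∈ s, ψ (f i) := by
  classical
  induction s using Finset.cons_induction with
  | empty => simp
  | cons a s ha ih => rw [Finset.sum_cons, Finset.prod_cons, AddChar.map_add_eq_mul, ih]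

lemma ortho {F : Type*} [Field F] [Fintype F] [DecidableEq F]
    (ψ : AddChar F ℂ) (hψ : ψ.IsPrimitive) (n : ℕ) (η : Fin n → F) :
    ∑ x : Fin n → F, ψ (∑ i, x i * η i) = if η = 0 then ((Fintype.card F : ℂ)) ^ n else 0 := by
  have h1 : ∀ x : Fin n → F, ψ (∑ i, x i * η i) = ∏ i, ψ (x i * η i) := fun x =>
    addChar_map_sum ψ _ _
  simp_rw [h1]
  rw [← Fintype.piFinset_univ,
    Finset.sum_prod_piFinset (univ : Finset F) (fun i t => ψ (t * η i))]
  have h2 : ∀ i, (∑ t : F, ψ (t * η i)) = if η i = 0 then ((Fintype.card F : ℂ)) else 0 :=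
    fun i => by exact_mod_cast AddChar.sum_mulShift (η i) hψ
  simp_rw [h2]
  by_cases hη : η = 0
  · simp [hη]
  · rw [if_neg hη]
    have : ∃ i, η i ≠ 0 := by
      by_contra hc
      push_neg at hc
      exact hη (funext hc)
    obtain ⟨i, hi⟩ := this
    exact Finset.prod_eq_zero (mem_univ i) (by rw [if_neg hi])

lemma sum_fiber3 {ι κ M : Type*} [Fintype κ] [AddCommMonoid M]
    (s : Finset ι) (g : ι → κ) (v : ι → M) (t : κ → Finset ι)
    (ht : ∀ j i, i ∈ t j ↔ i ∈ s ∧ g i = j) :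
    ∑ j : κ, ∑ i ∈ t j, v i = ∑ i ∈ s, v i := by
  classical
  have h1 : ∀ j, t j = s.filter (fun i => g i = j) := fun j =>
    Finset.ext fun i => by simp [ht, Finset.mem_filter]
  simp_rw [h1]
  exact Finset.sum_fiberwise s g v

lemma parseval {F : Type*} [Field F] [Fintype F] [DecidableEq F]
    (ψ : AddChar F ℂ) (hψ : ψ.IsPrimitive) (n : ℕ) (h : (Fin n → F) → ℂ) :
    ∑ x : Fin n → F, ‖∑ η : Fin n → F, h η * ψ (∑ i, x i * η i)‖ ^ 2
      = (Fintype.card F : ℝ) ^ n * ∑ η : Fin n → F, ‖h η‖ ^ 2 := by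
  have hpos : 0 < ringChar F := Nat.pos_of_ne_zero (CharP.ringChar_ne_zero_of_finite F)
  have hconj : ∀ a : F, (starRingEnd ℂ) (ψ a) = ψ (-a) := fun a => by
    rw [AddChar.starComp_apply hpos, AddChar.inv_apply]
  have key : ∑ x : Fin n → F, (∑ η : Fin n → F, h η * ψ (∑ i, x i * η i)) *
      (starRingEnd ℂ) (∑ η : Fin n → F, h η * ψ (∑ i, x i * η i))
      = (Fintype.card F : ℂ) ^ n * ∑ η : Fin n → F, h η * (starRingEnd ℂ) (h η) := by
    have expand : ∀ x : Fin n → F,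
        (∑ η : Fin n → F, h η * ψ (∑ i, x i * η i)) *
          (starRingEnd ℂ) (∑ η : Fin n → F, h η * ψ (∑ i, x i * η i))
        = ∑ η : Fin n → F, ∑ η' : Fin n → F,
            (h η * (starRingEnd ℂ) (h η')) * ψ (∑ i, x i * (η i - η' i)) := by
      intro x
      rw [map_sum, Finset.sum_mul_sum]
      refine Finset.sum_congr rfl fun η _ => Finset.sum_congr rfl fun η' _ => ?_
      rw [map_mul, hconj]
      rw [mul_mul_mul_comm]
      congr 1
      rw [← AddChar.map_add_eq_mul]
      congr 1
      rw [← Finset.sum_neg_distrib, ← Finset.sum_add_distrib]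
      exact Finset.sum_congr rfl fun i _ => by ring
    simp_rw [expand]
    calc ∑ x : Fin n → F, ∑ η : Fin n → F, ∑ η' : Fin n → F,
            (h η * (starRingEnd ℂ) (h η')) * ψ (∑ i, x i * (η i - η' i))
        = ∑ η : Fin n → F, ∑ η' : Fin n → F, ∑ x : Fin n → F,
            (h η * (starRingEnd ℂ) (h η')) * ψ (∑ i, x i * (η i - η' i)) := by
          rw [Finset.sum_comm]
          exact Finset.sum_congr rfl fun η _ => Finset.sum_comm
      _ = ∑ η : Fin n → F, ∑ η' : Fin n → F, (h η * (starRingEnd ℂ) (h η')) *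
            (if (fun i => η i - η' i) = (0 : Fin n → F) then ((Fintype.card F : ℂ)) ^ n
              else 0) := by
          refine Finset.sum_congr rfl fun η _ => Finset.sum_congr rfl fun η' _ => ?_
          rw [← Finset.mul_sum, ortho ψ hψ n (fun i => η i - η' i)]
      _ = ∑ η : Fin n → F, (h η * (starRingEnd ℂ) (h η)) * ((Fintype.card F : ℂ)) ^ n := by
          refine Finset.sum_congr rfl fun η _ => ?_
          rw [Finset.sum_eq_single η]
          · rw [if_pos (by funext i; simp)]
          · intro b _ hb
            rw [if_neg, mul_zero]
            intro hc
            exact hb (funext fun i => by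
              have := congrFun hc i
              simp only [Pi.zero_apply, sub_eq_zero] at this
              exact this.symm)
          · intro hmem; exact absurd (mem_univ η) hmem
      _ = (Fintype.card F : ℂ) ^ n * ∑ η : Fin n → F, h η * (starRingEnd ℂ) (h η) := by
          rw [← Finset.sum_mul, mul_comm]
  have habs : ∀ z : ℂ, z * (starRingEnd ℂ) z = ((‖z‖ ^ 2 : ℝ) : ℂ) := fun z => by
    rw [Complex.mul_conj, Complex.sq_norm]
  simp_rw [habs] at key
  rw [← Complex.ofReal_sum, ← Complex.ofReal_sum] at key
  have : ((∑ x : Fin n → F, ‖∑ η : Fin n → F, h η * ψ (∑ i, x i * η i)‖ ^ 2 : ℝ) : ℂ)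
      = (((Fintype.card F : ℝ) ^ n * ∑ η : Fin n → F, ‖h η‖ ^ 2 : ℝ) : ℂ) := by
    rw [key]; push_cast; ring
  exact_mod_cast this

set_option maxHeartbeats 2000000 in
theorem statement0
    {F : Type*} [Field F] [Fintype F] [DecidableEq F]
    (hchar : ringChar F ≠ 2)
    (ψ : AddChar F ℂ) (hψ : ∃ a, ψ a ≠ 1)
    (n k : ℕ) (hn : 1 ≤ n) (hk : 1 ≤ k)
    (S : Finset (Fin n → F)) (hS : S.Nonempty)
    (A : ℝ) (hA : 1 ≤ A)
    (hcount : ∀ η : Fin n → F,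
      ((Finset.univ.filter (fun ξ : Fin k → (Fin n → F) =>
        (∀ i, ξ i ∈ S) ∧ ∑ i, ξ i = η)).card : ℝ) ≤ A)
    (g : (Fin n → F) → ℂ) :
    ambNorm (2 * (k : ℝ)) (extOp ψ S g) ≤
      A ^ (1 / (2 * (k : ℝ))) * (Fintype.card F : ℝ) ^ ((n : ℝ) / (2 * (k : ℝ))) *
        (S.card : ℝ) ^ (-(1 : ℝ) / 2) * surfNorm 2 S g := by
  classical
  have hprim : ψ.IsPrimitive := AddChar.IsPrimitive.of_ne_one (AddChar.ne_one_iff.2 hψ)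
  have hq0 : (0:ℝ) < (Fintype.card F : ℝ) := by
    exact_mod_cast Fintype.card_pos
  have hs0 : (0:ℝ) < (S.card : ℝ) := by exact_mod_cast Finset.card_pos.2 hS
  have hA0 : (0:ℝ) < A := lt_of_lt_of_le one_pos hA
  have hk0 : (0:ℝ) < (k:ℝ) := by exact_mod_cast hk
  set T : (Fin n → F) → Finset (Fin k → (Fin n → F)) :=
    fun η => (Fintype.piFinset fun _ : Fin k => S).filter (fun ξ => ∑ i, ξ i = η) with hT
  set h : (Fin n → F) → ℂ := fun η => ∑ ξ ∈ T η, ∏ i, g (ξ i) with hh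
  set G : ℝ := ∑ ξ ∈ S, ‖g ξ‖ ^ 2 with hG
  have hG0 : (0:ℝ) ≤ G := Finset.sum_nonneg fun ξ _ => by positivity
  -- Step A: pointwise expansion of the k-th power
  have stepA : ∀ x : Fin n → F, extOp ψ S g x ^ k
      = ((S.card : ℂ)⁻¹) ^ k * ∑ η : Fin n → F, h η * ψ (∑ i, x i * η i) := by
    intro x
    simp only [extOp]
    rw [mul_pow]
    congr 1
    rw [Finset.sum_pow']
    have e1 : ∀ p : Fin k → (Fin n → F),
        (∏ i, (g (p i) * ψ (∑ j, x j * p i j)))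
        = (∏ i, g (p i)) * ψ (∑ j, x j * (∑ i, p i) j) := by
      intro p
      rw [Finset.prod_mul_distrib]
      congr 1
      rw [← addChar_map_sum]
      congr 1
      rw [Finset.sum_comm]
      refine Finset.sum_congr rfl fun j _ => ?_
      rw [Finset.sum_apply, Finset.mul_sum]
    simp_rw [e1]
    refine Eq.trans (sum_fiber3 (Fintype.piFinset fun _ : Fin k => S)
      (fun p => ∑ i, p i) _ T (fun η ξ => by simp [hT, Finset.mem_filter])).symm ?_
    refine Finset.sum_congr rfl fun η _ => ?_
    calc ∑ p ∈ T η, (∏ i, g (p i)) * ψ (∑ j, x j * (∑ i, p i) j)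
        = ∑ p ∈ T η, (∏ i, g (p i)) * ψ (∑ j, x j * η j) := by
          refine Finset.sum_congr rfl fun p hp => ?_
          have hpη : (∑ i, p i) = η := by
            simp only [hT, Finset.mem_filter] at hp
            exact hp.2
          rw [hpη]
      _ = h η * ψ (∑ j, x j * η j) := by
          simp only [hh]
          rw [Finset.sum_mul]
  -- Step B: L^{2k} mass via Parseval
  have stepB : ∑ x : Fin n → F, ‖extOp ψ S g x‖ ^ (2 * k)
      = ((S.card : ℝ)⁻¹) ^ (2 * k) *
        ((Fintype.card F : ℝ) ^ n * ∑ η : Fin n → F, ‖h η‖ ^ 2) := by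
    have e : ∀ x : Fin n → F, ‖extOp ψ S g x‖ ^ (2 * k)
        = ((S.card : ℝ)⁻¹) ^ (2 * k) *
          ‖∑ η : Fin n → F, h η * ψ (∑ i, x i * η i)‖ ^ 2 := by
      intro x
      have e0 : ‖extOp ψ S g x‖ ^ (2 * k)
          = ‖extOp ψ S g x ^ k‖ ^ 2 := by
        rw [norm_pow, ← pow_mul, mul_comm]
      rw [e0, stepA x, norm_mul, norm_pow, norm_inv, Complex.norm_natCast, mul_pow, ← pow_mul,
        mul_comm k 2]
    simp_rw [e]
    rw [← Finset.mul_sum, parseval ψ hprim n h]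
  -- Step C: Cauchy-Schwarz and the counting hypothesis
  have stepC : ∑ η : Fin n → F, ‖h η‖ ^ 2 ≤ A * G ^ k := by
    have perη : ∀ η : Fin n → F, ‖h η‖ ^ 2
        ≤ A * ∑ p ∈ T η, ∏ i, ‖g (p i)‖ ^ 2 := by
      intro η
      have h1 : ‖h η‖ ≤ ∑ p ∈ T η, ‖∏ i, g (p i)‖ := by
        simp only [hh]
        exact norm_sum_le _ _
      have h2 : ‖h η‖ ^ 2 ≤ (∑ p ∈ T η, ‖∏ i, g (p i)‖) ^ 2 :=
        pow_le_pow_left₀ (norm_nonneg _) h1 2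
      have h3 : (∑ p ∈ T η, ‖∏ i, g (p i)‖) ^ 2
          ≤ ((T η).card : ℝ) * ∑ p ∈ T η, ‖∏ i, g (p i)‖ ^ 2 :=
        sq_sum_le_card_mul_sum_sq
      have hcard : ((T η).card : ℝ) ≤ A := by
        have hTeq : T η = Finset.univ.filter (fun ξ : Fin k → (Fin n → F) =>
            (∀ i, ξ i ∈ S) ∧ ∑ i, ξ i = η) := by
          ext ξ
          simp [hT, Fintype.mem_piFinset]
        rw [hTeq]
        exact hcount η
      calc ‖h η‖ ^ 2
          ≤ ((T η).card : ℝ) * ∑ p ∈ T η, ‖∏ i, g (p i)‖ ^ 2 := h2.trans h3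
        _ ≤ A * ∑ p ∈ T η, ‖∏ i, g (p i)‖ ^ 2 :=
            mul_le_mul_of_nonneg_right hcard (Finset.sum_nonneg fun p _ => by positivity)
        _ = A * ∑ p ∈ T η, ∏ i, ‖g (p i)‖ ^ 2 := by
            congr 1
            refine Finset.sum_congr rfl fun p _ => ?_
            rw [norm_prod, ← Finset.prod_pow]
    calc ∑ η : Fin n → F, ‖h η‖ ^ 2
        ≤ ∑ η : Fin n → F, A * ∑ p ∈ T η, ∏ i, ‖g (p i)‖ ^ 2 :=
          Finset.sum_le_sum fun η _ => perη η
      _ = A * ∑ η : Fin n → F, ∑ p ∈ T η, ∏ i, ‖g (p i)‖ ^ 2 := by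
          rw [← Finset.mul_sum]
      _ = A * ∑ p ∈ Fintype.piFinset (fun _ : Fin k => S), ∏ i, ‖g (p i)‖ ^ 2 := by
          congr 1
          exact sum_fiber3 (Fintype.piFinset fun _ : Fin k => S)
            (fun p => ∑ i, p i) _ T (fun η ξ => by simp [hT, Finset.mem_filter])
      _ = A * G ^ k := by
          congr 1
          rw [hG, Finset.sum_pow']
  -- Combine
  have hsum_le : ∑ x : Fin n → F, ‖extOp ψ S g x‖ ^ (2 * k)
      ≤ A * (Fintype.card F : ℝ) ^ n * ((S.card : ℝ)⁻¹) ^ (2 * k) * G ^ k := by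
    rw [stepB]
    calc ((S.card : ℝ)⁻¹) ^ (2 * k) *
          ((Fintype.card F : ℝ) ^ n * ∑ η : Fin n → F, ‖h η‖ ^ 2)
        ≤ ((S.card : ℝ)⁻¹) ^ (2 * k) * ((Fintype.card F : ℝ) ^ n * (A * G ^ k)) := by
          refine mul_le_mul_of_nonneg_left (mul_le_mul_of_nonneg_left stepC ?_) ?_ <;> positivity
      _ = A * (Fintype.card F : ℝ) ^ n * ((S.card : ℝ)⁻¹) ^ (2 * k) * G ^ k := by ring
  -- Final rpow arithmetic
  simp only [ambNorm, surfNorm]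
  have hexp : ∀ x : Fin n → F, ‖extOp ψ S g x‖ ^ (2 * (k:ℝ))
      = ‖extOp ψ S g x‖ ^ (2 * k : ℕ) := fun x => by
    rw [← Real.rpow_natCast (‖extOp ψ S g x‖) (2 * k)]
    norm_num
  simp_rw [hexp]
  have hg2 : ∀ ξ : Fin n → F, ‖g ξ‖ ^ (2:ℝ) = ‖g ξ‖ ^ (2:ℕ) := fun ξ => by
    rw [← Real.rpow_natCast (‖g ξ‖) 2]
    norm_num
  simp_rw [hg2]
  have hmono := Real.rpow_le_rpow
    (Finset.sum_nonneg fun x _ => by positivity) hsum_le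
    (by positivity : (0:ℝ) ≤ 1 / (2 * (k:ℝ)))
  refine hmono.trans_eq ?_
  -- rewrite everything in rpow form
  have h2k : ((2 * k : ℕ) : ℝ) = 2 * (k:ℝ) := by push_cast; ring
  have hkk : (0:ℝ) < 2 * (k:ℝ) := by positivity
  have e : A * (Fintype.card F : ℝ) ^ n * ((S.card : ℝ)⁻¹) ^ (2 * k) * G ^ k
      = A * (Fintype.card F : ℝ) ^ ((n:ℕ):ℝ) * ((S.card : ℝ)⁻¹) ^ (2 * (k:ℝ)) * G ^ ((k:ℕ):ℝ) := by
    rw [← Real.rpow_natCast (Fintype.card F : ℝ) n, ← Real.rpow_natCast ((S.card : ℝ)⁻¹) (2 * k),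
      ← Real.rpow_natCast G k, h2k]
  rw [e]
  rw [Real.mul_rpow (by positivity) (Real.rpow_nonneg hG0 _),
    Real.mul_rpow (by positivity) (Real.rpow_nonneg (by positivity) _),
    Real.mul_rpow (le_of_lt hA0) (Real.rpow_nonneg (le_of_lt hq0) _)]
  rw [← Real.rpow_mul (le_of_lt hq0), ← Real.rpow_mul (by positivity : (0:ℝ) ≤ (S.card:ℝ)⁻¹),
    ← Real.rpow_mul hG0]
  have e1 : ((n:ℕ):ℝ) * (1 / (2 * (k:ℝ))) = (n:ℝ) / (2 * (k:ℝ)) := mul_one_div _ _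
  have e2 : (2 * (k:ℝ)) * (1 / (2 * (k:ℝ))) = 1 := mul_one_div_cancel (ne_of_gt hkk)
  have e3 : ((k:ℕ):ℝ) * (1 / (2 * (k:ℝ))) = 1 / 2 := by
    field_simp
  rw [e1, e2, e3, Real.rpow_one]
  have hhalf : (S.card:ℝ) ^ (-(1:ℝ)/2) * ((S.card:ℝ)⁻¹) ^ ((1:ℝ)/2) = (S.card:ℝ)⁻¹ := by
    rw [Real.inv_rpow (le_of_lt hs0), ← Real.rpow_neg (le_of_lt hs0), ← Real.rpow_add hs0]
    norm_num [Real.rpow_neg_one]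
  calc A ^ (1 / (2 * (k:ℝ))) * (Fintype.card F : ℝ) ^ ((n:ℝ) / (2 * (k:ℝ))) *
        (S.card:ℝ)⁻¹ * G ^ ((1:ℝ)/2)
      = A ^ (1 / (2 * (k:ℝ))) * (Fintype.card F : ℝ) ^ ((n:ℝ) / (2 * (k:ℝ))) *
        ((S.card:ℝ) ^ (-(1:ℝ)/2) * ((S.card:ℝ)⁻¹) ^ ((1:ℝ)/2)) * G ^ ((1:ℝ)/2) := by
        rw [hhalf]
    _ = A ^ (1 / (2 * (k:ℝ))) * (Fintype.card F : ℝ) ^ ((n:ℝ) / (2 * (k:ℝ))) *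
        (S.card:ℝ) ^ (-(1:ℝ)/2) * (((S.card:ℝ)⁻¹) ^ ((1:ℝ)/2) * G ^ ((1:ℝ)/2)) := by ring
    _ = A ^ (1 / (2 * (k:ℝ))) * (Fintype.card F : ℝ) ^ ((n:ℝ) / (2 * (k:ℝ))) *
        (S.card:ℝ) ^ (-(1:ℝ)/2) * ((S.card:ℝ)⁻¹ * G) ^ ((1:ℝ)/2) := by
        rw [← Real.mul_rpow (by positivity) hG0]
end

section
/- Let n ≥ 2 and let S := {(ξ, ξ·ξ) : ξ ∈ F^{n−1}} ⊆ F^{n−1} × F = F^n be the paraboloid. Then for every g : S → ℂ one has ‖(g dσ)ˇ‖_{L^4(F^n,dx)} ≤ 2^{1/4} ‖g‖_{L^2(S,dσ)}. -/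
open scoped BigOperators
open Finset

/-- The paraboloid `{(ξ, ξ·ξ) : ξ ∈ F^m} ⊆ F^{m+1}`. -/
def paraboloid (F : Type*) [Field F] [Fintype F] [DecidableEq F] (m : ℕ) :
    Finset (Fin (m + 1) → F) :=
  Finset.image (fun ξ : Fin m → F => Fin.snoc ξ (∑ i, ξ i * ξ i)) Finset.univ

section Helpers

variable {F : Type*} [Field F] [Fintype F] [DecidableEq F]

lemma quadCard {α β γ : F} (hα : α ≠ 0) :
    (Finset.univ.filter (fun t : F => α * t ^ 2 + β * t + γ = 0)).card ≤ 2 := by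
  classical
  set p : Polynomial F := Polynomial.C α * Polynomial.X ^ 2 + Polynomial.C β * Polynomial.X
      + Polynomial.C γ with hp
  have hpne : p ≠ 0 := by
    intro h
    have := Polynomial.natDegree_quadratic hα (b := β) (c := γ)
    rw [← hp, h, Polynomial.natDegree_zero] at this
    exact two_ne_zero this.symm
  have hsub : (Finset.univ.filter (fun t : F => α * t ^ 2 + β * t + γ = 0))
      ⊆ p.roots.toFinset := by
    intro t ht
    simp only [Finset.mem_filter] at ht
    rw [Multiset.mem_toFinset, Polynomial.mem_roots hpne]
    simp [p, Polynomial.IsRoot, ht.2]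
  calc (Finset.univ.filter (fun t : F => α * t ^ 2 + β * t + γ = 0)).card
      ≤ p.roots.toFinset.card := Finset.card_le_card hsub
    _ ≤ Multiset.card p.roots := Multiset.toFinset_card_le _
    _ ≤ p.natDegree := p.card_roots'
    _ = 2 := Polynomial.natDegree_quadratic hα

lemma sumCharVec {ψ : AddChar F ℂ} (hψ : ψ ≠ 1) :
    ∀ (k : ℕ) (v : Fin k → F),
      ∑ x : Fin k → F, ψ (∑ i, x i * v i)
        = if v = 0 then ((Fintype.card F : ℂ) ^ k) else 0 := by
  intro k
  induction k with
  | zero =>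
      intro v
      simp [Subsingleton.elim v 0]
  | succ k ih =>
      intro v
      rw [← (Fin.consEquiv (fun _ : Fin (k + 1) => F)).sum_comp]
      have h1 : ∀ p : F × (Fin k → F),
          ψ (∑ i, (Fin.cons p.1 p.2 : Fin (k + 1) → F) i * v i)
            = ψ (p.1 * v 0) * ψ (∑ i, p.2 i * v (Fin.succ i)) := by
        intro p
        rw [← AddChar.map_add_eq_mul]
        congr 1
        rw [Fin.sum_univ_succ]
        simp [Fin.cons_zero, Fin.cons_succ]
      have h2 : ∀ p : F × (Fin k → F),
          (Fin.consEquiv (fun _ : Fin (k + 1) => F)) p = Fin.cons p.1 p.2 := fun _ => rfl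
      simp only [h2, h1]
      rw [Fintype.sum_prod_type]
      dsimp only
      rw [← Finset.sum_mul_sum]
      rw [AddChar.sum_mulShift _ (AddChar.IsPrimitive.of_ne_one hψ), ih (fun i => v (Fin.succ i))]
      by_cases h0 : v = 0
      · have hz : (fun _ : Fin k => (0 : F)) = 0 := rfl
        simp [h0, hz, pow_succ, mul_comm]
      · have : ¬ (v 0 = 0 ∧ (fun i => v (Fin.succ i)) = 0) := by
          intro ⟨ha, hb⟩
          apply h0
          funext i
          refine Fin.cases ha (fun j => ?_) i
          exact congrFun hb j
        rcases Decidable.not_and_iff_or_not.mp this with h | h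
        · rw [if_neg h, if_neg h0]; simp
        · rw [if_neg h, if_neg h0]; simp

lemma sliceCard (h2 : (2 : F) ≠ 0) (k : ℕ) (b : Fin (k + 1) → F) (e : F) :
    (Finset.univ.filter (fun x : Fin (k + 1) → F =>
        2 * (∑ i, x i * x i) + (∑ i, b i * x i) + e = 0)).card
      ≤ 2 * Fintype.card F ^ k := by
  classical
  rw [Finset.card_filter]
  rw [← (Fin.consEquiv (fun _ : Fin (k + 1) => F)).sum_comp]
  have h1 : ∀ p : F × (Fin k → F),
      (if 2 * (∑ i, (Fin.cons p.1 p.2 : Fin (k + 1) → F) i * (Fin.cons p.1 p.2 : Fin (k + 1) → F) i)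
          + (∑ i, b i * (Fin.cons p.1 p.2 : Fin (k + 1) → F) i) + e = 0 then 1 else 0)
        = (if 2 * p.1 ^ 2 + b 0 * p.1
            + (2 * (∑ i, p.2 i * p.2 i) + (∑ i, b (Fin.succ i) * p.2 i) + e) = 0 then 1 else 0) := by
    intro p
    congr 1
    rw [eq_iff_iff]
    constructor <;> intro h <;> rw [← h] <;>
      · rw [Fin.sum_univ_succ, Fin.sum_univ_succ]
        simp only [Fin.cons_zero, Fin.cons_succ]
        ring
  have h2' : ∀ p : F × (Fin k → F),
      (Fin.consEquiv (fun _ : Fin (k + 1) => F)) p = Fin.cons p.1 p.2 := fun _ => rfl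
  simp only [h2', h1]
  rw [Fintype.sum_prod_type]
  dsimp only
  rw [Finset.sum_comm]
  calc ∑ y : Fin k → F, ∑ t : F, (if 2 * t ^ 2 + b 0 * t
            + (2 * (∑ i, y i * y i) + (∑ i, b (Fin.succ i) * y i) + e) = 0 then 1 else 0)
      ≤ ∑ _y : Fin k → F, 2 := by
        apply Finset.sum_le_sum
        intro y _
        rw [← Finset.card_filter]
        exact quadCard h2
    _ = 2 * Fintype.card F ^ k := by
        rw [Finset.sum_const]
        simp [mul_comm, Fintype.card_fun]

lemma prod4 {ι : Type*} [Fintype ι] (f h : ι → ℂ) :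
    ((∑ a, f a) * (∑ a, f a)) * ((∑ a, h a) * (∑ a, h a))
      = ∑ p : (ι × ι) × (ι × ι), f p.1.1 * f p.1.2 * (h p.2.1 * h p.2.2) := by
  simp only [Fintype.sum_prod_type]
  rw [Finset.sum_mul_sum, Finset.sum_mul_sum, Finset.sum_mul_sum]
  refine Finset.sum_congr rfl (fun a _ => ?_)
  calc ∑ cc, (∑ b, f a * f b) * (∑ d, h cc * h d)
      = ∑ cc, ∑ b, ∑ d, f a * f b * (h cc * h d) := by
        refine Finset.sum_congr rfl (fun cc _ => ?_)
        rw [Finset.sum_mul_sum]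
    _ = ∑ b, ∑ cc, ∑ d, f a * f b * (h cc * h d) := Finset.sum_comm

end Helpers

theorem statement2
    {F : Type*} [Field F] [Fintype F] [DecidableEq F]
    (hchar : ringChar F ≠ 2)
    (ψ : AddChar F ℂ) (hψ : ∃ a, ψ a ≠ 1)
    (m : ℕ) (hm : 1 ≤ m)
    (g : (Fin (m + 1) → F) → ℂ) :
    ambNorm 4 (extOp ψ (paraboloid F m) g) ≤
      (2 : ℝ) ^ ((1 : ℝ) / 4) * surfNorm 2 (paraboloid F m) g := by
  classical
  obtain ⟨k, rfl⟩ : ∃ k, m = k + 1 := ⟨m - 1, (Nat.succ_pred_eq_of_pos hm).symm⟩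
  have hψ1 : ψ ≠ 1 := AddChar.ne_one_iff.mpr hψ
  have h2F : (2 : F) ≠ 0 := Ring.two_ne_zero hchar
  set q : ℕ := Fintype.card F with hqdef
  have hq : 0 < q := Fintype.card_pos
  -- basic objects
  set Q : (Fin (k + 1) → F) → F := fun ξ => ∑ i, ξ i * ξ i with hQdef
  set Φ : (Fin (k + 1) → F) → (Fin (k + 2) → F) := fun ξ => Fin.snoc ξ (Q ξ) with hΦdef
  have hΦinj : Function.Injective Φ := by
    intro a b h
    have := congrArg Fin.init h
    simpa [Φ, Fin.init_snoc] using this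
  set G : (Fin (k + 1) → F) → ℂ := fun ξ => g (Φ ξ) with hGdef
  have hpara : paraboloid F (k + 1) = Finset.image Φ Finset.univ := rfl
  have hcard : (paraboloid F (k + 1)).card = q ^ (k + 1) := by
    rw [hpara, Finset.card_image_of_injective _ hΦinj, Finset.card_univ, Fintype.card_fun,
      Fintype.card_fin]
  have hsumim : ∀ {M : Type} [AddCommMonoid M] (f : (Fin (k + 2) → F) → M),
      ∑ ζ ∈ paraboloid F (k + 1), f ζ = ∑ ξ : Fin (k + 1) → F, f (Φ ξ) := by
    intro M _ f
    rw [hpara]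
    exact Finset.sum_image (fun a _ b _ h => hΦinj h)
  -- dot product
  set dot : (Fin (k + 2) → F) → (Fin (k + 2) → F) → F := fun x w => ∑ i, x i * w i with hdot
  have dot_add : ∀ x u v, dot x (u + v) = dot x u + dot x v := by
    intro x u v
    simp [dot, mul_add, Finset.sum_add_distrib]
  have dot_neg : ∀ x u, dot x (-u) = -dot x u := by
    intro x u
    simp [dot]
  -- the extension operator
  set c : ℂ := ((q : ℂ) ^ (k + 1))⁻¹ with hc
  set S : (Fin (k + 2) → F) → ℂ := fun x => ∑ ξ, G ξ * ψ (dot x (Φ ξ)) with hS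
  set E : (Fin (k + 2) → F) → ℂ := extOp ψ (paraboloid F (k + 1)) g with hE
  have hEx : ∀ x, E x = c * S x := by
    intro x
    rw [hE]
    show ((paraboloid F (k + 1)).card : ℂ)⁻¹ * ∑ ζ ∈ paraboloid F (k + 1),
        g ζ * ψ (∑ i, x i * ζ i) = c * S x
    rw [hcard, hsumim (fun ζ => g ζ * ψ (∑ i, x i * ζ i))]
    push_cast
    rfl
  have hconjc : (starRingEnd ℂ) c = c := by
    simp [hc]
  have hconjS : ∀ x, (starRingEnd ℂ) (S x)
      = ∑ ξ, (starRingEnd ℂ) (G ξ) * ψ (-(dot x (Φ ξ))) := by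
    intro x
    rw [hS, map_sum]
    refine Finset.sum_congr rfl (fun ξ _ => ?_)
    rw [map_mul, AddChar.map_neg_eq_conj]
  -- the quadruple machinery
  set cond : ((Fin (k + 1) → F) × (Fin (k + 1) → F)) × ((Fin (k + 1) → F) × (Fin (k + 1) → F))
      → Prop := fun p => Φ p.1.1 + Φ p.1.2 = Φ p.2.1 + Φ p.2.2 with hcond
  set T := Finset.univ.filter cond with hT
  set coeff : ((Fin (k + 1) → F) × (Fin (k + 1) → F)) × ((Fin (k + 1) → F) × (Fin (k + 1) → F))
      → ℂ := fun p => G p.1.1 * G p.1.2 * ((starRingEnd ℂ) (G p.2.1) * (starRingEnd ℂ) (G p.2.2))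
      with hcoeff
  set vv : ((Fin (k + 1) → F) × (Fin (k + 1) → F)) × ((Fin (k + 1) → F) × (Fin (k + 1) → F))
      → (Fin (k + 2) → F) := fun p => Φ p.1.1 + Φ p.1.2 - Φ p.2.1 - Φ p.2.2 with hvv
  have hterm : ∀ x, (S x * S x) * ((starRingEnd ℂ) (S x) * (starRingEnd ℂ) (S x))
      = ∑ p : ((Fin (k + 1) → F) × (Fin (k + 1) → F)) × ((Fin (k + 1) → F) × (Fin (k + 1) → F)),
          coeff p * ψ (dot x (vv p)) := by
    intro x
    rw [hconjS, hS, prod4]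
    refine Finset.sum_congr rfl (fun p _ => ?_)
    have hsplit : ψ (dot x (vv p))
        = ψ (dot x (Φ p.1.1)) * ψ (dot x (Φ p.1.2))
          * (ψ (-(dot x (Φ p.2.1))) * ψ (-(dot x (Φ p.2.2)))) := by
      have hlin : dot x (vv p)
          = dot x (Φ p.1.1) + dot x (Φ p.1.2) + (-(dot x (Φ p.2.1)) + -(dot x (Φ p.2.2))) := by
        rw [hvv]
        dsimp only
        rw [sub_eq_add_neg, sub_eq_add_neg, dot_add, dot_add, dot_add, dot_neg, dot_neg]
        ring
      rw [hlin, AddChar.map_add_eq_mul, AddChar.map_add_eq_mul, AddChar.map_add_eq_mul]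
    rw [hsplit, hcoeff]
    ring
  -- the key complex identity
  have keyC : ∑ x : Fin (k + 2) → F, (E x * (starRingEnd ℂ) (E x)) ^ 2
      = c ^ 4 * ((q : ℂ) ^ (k + 2) * ∑ p ∈ T, coeff p) := by
    calc ∑ x : Fin (k + 2) → F, (E x * (starRingEnd ℂ) (E x)) ^ 2
        = ∑ x : Fin (k + 2) → F,
            c ^ 4 * ((S x * S x) * ((starRingEnd ℂ) (S x) * (starRingEnd ℂ) (S x))) := by
          refine Finset.sum_congr rfl (fun x _ => ?_)
          rw [hEx, map_mul, hconjc]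
          ring
      _ = c ^ 4 * ∑ p, coeff p * ∑ x : Fin (k + 2) → F, ψ (dot x (vv p)) := by
          rw [← Finset.mul_sum]
          congr 1
          calc ∑ x : Fin (k + 2) → F,
                (S x * S x) * ((starRingEnd ℂ) (S x) * (starRingEnd ℂ) (S x))
              = ∑ x : Fin (k + 2) → F, ∑ p, coeff p * ψ (dot x (vv p)) := by
                exact Finset.sum_congr rfl (fun x _ => hterm x)
            _ = ∑ p, ∑ x : Fin (k + 2) → F, coeff p * ψ (dot x (vv p)) := Finset.sum_comm
            _ = ∑ p, coeff p * ∑ x : Fin (k + 2) → F, ψ (dot x (vv p)) := by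
                exact Finset.sum_congr rfl (fun p _ => (Finset.mul_sum _ _ _).symm)
      _ = c ^ 4 * ∑ p, coeff p * (if vv p = 0 then ((q : ℂ)) ^ (k + 2) else 0) := by
          congr 1
          refine Finset.sum_congr rfl (fun p _ => ?_)
          congr 1
          exact sumCharVec hψ1 (k + 2) (vv p)
      _ = c ^ 4 * ((q : ℂ) ^ (k + 2) * ∑ p ∈ T, coeff p) := by
          congr 1
          rw [hT, Finset.sum_filter, Finset.mul_sum]
          refine Finset.sum_congr rfl (fun p _ => ?_)
          have hiff : vv p = 0 ↔ cond p := by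
            rw [hvv, hcond]
            dsimp only
            rw [sub_eq_zero, sub_eq_iff_eq_add]
            constructor
            · intro h; rw [h]; ring
            · intro h; rw [h]; ring
          by_cases hcp : cond p
          · rw [if_pos (hiff.mpr hcp), if_pos hcp]; ring
          · rw [if_neg (fun h => hcp (hiff.mp h)), if_neg hcp]; ring
  -- real-side quantities
  set wa : (Fin (k + 1) → F) → ℝ := fun ξ => ‖G ξ‖ with hwa
  set W : ℝ := ∑ ξ, wa ξ ^ 2 with hW
  have hWnn : 0 ≤ W := Finset.sum_nonneg fun ξ _ => sq_nonneg _
  -- expansion of squared sums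
  have hQsub : ∀ u x : Fin (k + 1) → F, (∑ i, (u - x) i * (u - x) i)
      = (∑ i, u i * u i) - 2 * (∑ i, u i * x i) + (∑ i, x i * x i) := by
    intro u x
    rw [Finset.mul_sum, ← Finset.sum_sub_distrib, ← Finset.sum_add_distrib]
    refine Finset.sum_congr rfl fun i _ => ?_
    simp only [Pi.sub_apply]
    ring
  have hdotneg : ∀ u x : Fin (k + 1) → F,
      (∑ i, (-2 * u i) * x i) = -(2 * ∑ i, u i * x i) := by
    intro u x
    rw [Finset.mul_sum]
    rw [← Finset.sum_neg_distrib]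
    refine Finset.sum_congr rfl fun i _ => by ring
  -- fiber counting
  have hN : ∀ a : (Fin (k + 1) → F) × (Fin (k + 1) → F),
      (Finset.univ.filter (fun b : (Fin (k + 1) → F) × (Fin (k + 1) → F) =>
        Φ a.1 + Φ a.2 = Φ b.1 + Φ b.2)).card ≤ 2 * q ^ k := by
    intro a
    have hext : ∀ b : (Fin (k + 1) → F) × (Fin (k + 1) → F),
        Φ a.1 + Φ a.2 = Φ b.1 + Φ b.2
          → b.1 + b.2 = a.1 + a.2 ∧ Q b.1 + Q b.2 = Q a.1 + Q a.2 := by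
      intro b h
      constructor
      · funext i
        have := congrFun h (Fin.castSucc i)
        simp only [hΦdef, Pi.add_apply, Fin.snoc_castSucc] at this
        simpa using this.symm
      · have := congrFun h (Fin.last (k + 1))
        simp only [hΦdef, Pi.add_apply, Fin.snoc_last] at this
        exact this.symm
    refine le_trans (Finset.card_le_card_of_injOn (fun b => b.1) ?_ ?_)
      ((sliceCard h2F k (fun i => -2 * (a.1 + a.2) i)
        ((∑ i, (a.1 + a.2) i * (a.1 + a.2) i) - (Q a.1 + Q a.2))).trans_eq rfl)
    · intro b hb
      rw [Finset.mem_coe, Finset.mem_filter] at hb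
      obtain ⟨h1, h2⟩ := hext b hb.2
      have hb2 : b.2 = (a.1 + a.2) - b.1 := by rw [← h1]; ring
      rw [hb2] at h2
      have h2' : Q b.1 + ((∑ i, (a.1 + a.2) i * (a.1 + a.2) i)
          - 2 * (∑ i, (a.1 + a.2) i * b.1 i) + (∑ i, b.1 i * b.1 i))
            = Q a.1 + Q a.2 := by
        rw [← hQsub (a.1 + a.2) b.1]
        exact h2
      rw [Finset.mem_coe, Finset.mem_filter]
      refine ⟨Finset.mem_univ _, ?_⟩
      rw [hdotneg (a.1 + a.2) b.1]
      simp only [hQdef] at h2' ⊢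
      linear_combination h2'
    · intro b hb b' hb' hfeq
      rw [Finset.coe_filter, Set.mem_setOf_eq] at hb hb'
      obtain ⟨h1, -⟩ := hext b hb.2
      obtain ⟨h1', -⟩ := hext b' hb'.2
      have hsnd : b.2 = b'.2 := by
        have e1 : b.2 = (a.1 + a.2) - b.1 := by rw [← h1]; ring
        have e2 : b'.2 = (a.1 + a.2) - b'.1 := by rw [← h1']; ring
        rw [e1, e2]
        simp only at hfeq
        rw [hfeq]
      exact Prod.ext hfeq hsnd
  -- bound on the energy sum
  set Λ : ℂ := ∑ p ∈ T, coeff p with hΛ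
  have habsΛ : ‖Λ‖ ≤ 2 * (q : ℝ) ^ k * W ^ 2 := by
    have step1 : ‖Λ‖ ≤ ∑ p ∈ T, wa p.1.1 * wa p.1.2 * (wa p.2.1 * wa p.2.2) := by
      refine le_trans (norm_sum_le _ _) (le_of_eq (Finset.sum_congr rfl fun p _ => ?_))
      rw [hcoeff]
      dsimp only
      rw [norm_mul, norm_mul, norm_mul, Complex.norm_conj, Complex.norm_conj]
    have hsym : ∑ p ∈ T, wa p.2.1 ^ 2 * wa p.2.2 ^ 2 = ∑ p ∈ T, wa p.1.1 ^ 2 * wa p.1.2 ^ 2 := by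
      refine Finset.sum_bij' (fun p _ => (p.2, p.1)) (fun p _ => (p.2, p.1)) ?_ ?_ ?_ ?_ ?_
      · intro p hp
        rw [hT] at hp
        have hp' : cond p := (Finset.mem_filter.mp hp).2
        exact Finset.mem_filter.mpr ⟨Finset.mem_univ _, Eq.symm hp'⟩
      · intro p hp
        rw [hT] at hp
        have hp' : cond p := (Finset.mem_filter.mp hp).2
        exact Finset.mem_filter.mpr ⟨Finset.mem_univ _, Eq.symm hp'⟩
      · intro p _; rfl
      · intro p _; rfl
      · intro p _; rfl
    have step2 : ∑ p ∈ T, wa p.1.1 * wa p.1.2 * (wa p.2.1 * wa p.2.2)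
        ≤ ∑ p ∈ T, wa p.1.1 ^ 2 * wa p.1.2 ^ 2 := by
      have hpt : ∀ p ∈ T, wa p.1.1 * wa p.1.2 * (wa p.2.1 * wa p.2.2)
          ≤ (wa p.1.1 ^ 2 * wa p.1.2 ^ 2 + wa p.2.1 ^ 2 * wa p.2.2 ^ 2) / 2 := by
        intro p _
        have h1 : 0 ≤ wa p.1.1 * wa p.1.2 :=
          mul_nonneg (norm_nonneg _) (norm_nonneg _)
        have h2 : 0 ≤ wa p.2.1 * wa p.2.2 :=
          mul_nonneg (norm_nonneg _) (norm_nonneg _)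
        nlinarith [sq_nonneg (wa p.1.1 * wa p.1.2 - wa p.2.1 * wa p.2.2)]
      calc ∑ p ∈ T, wa p.1.1 * wa p.1.2 * (wa p.2.1 * wa p.2.2)
          ≤ ∑ p ∈ T, (wa p.1.1 ^ 2 * wa p.1.2 ^ 2 + wa p.2.1 ^ 2 * wa p.2.2 ^ 2) / 2 :=
            Finset.sum_le_sum hpt
        _ = ((∑ p ∈ T, wa p.1.1 ^ 2 * wa p.1.2 ^ 2)
              + ∑ p ∈ T, wa p.2.1 ^ 2 * wa p.2.2 ^ 2) / 2 := by
            rw [← Finset.sum_add_distrib, Finset.sum_div]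
        _ = ∑ p ∈ T, wa p.1.1 ^ 2 * wa p.1.2 ^ 2 := by rw [hsym]; ring
    have step3 : ∑ p ∈ T, wa p.1.1 ^ 2 * wa p.1.2 ^ 2 ≤ 2 * (q : ℝ) ^ k * W ^ 2 := by
      have hsplit : ∑ p ∈ T, wa p.1.1 ^ 2 * wa p.1.2 ^ 2
          = ∑ a : (Fin (k + 1) → F) × (Fin (k + 1) → F), (wa a.1 ^ 2 * wa a.2 ^ 2) *
              ((Finset.univ.filter (fun b : (Fin (k + 1) → F) × (Fin (k + 1) → F) =>
                Φ a.1 + Φ a.2 = Φ b.1 + Φ b.2)).card : ℝ) := by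
        rw [hT, Finset.sum_filter, Fintype.sum_prod_type]
        refine Finset.sum_congr rfl fun a _ => ?_
        have hred : ∀ b : (Fin (k + 1) → F) × (Fin (k + 1) → F),
            (if cond (a, b) then wa (a, b).1.1 ^ 2 * wa (a, b).1.2 ^ 2 else 0)
              = (if Φ a.1 + Φ a.2 = Φ b.1 + Φ b.2 then wa a.1 ^ 2 * wa a.2 ^ 2 else 0) := by
          intro b
          exact if_congr (by rw [hcond]) rfl rfl
        simp only [hred]
        rw [← Finset.sum_filter, Finset.sum_const, nsmul_eq_mul]
        ring
      rw [hsplit]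
      calc ∑ a : (Fin (k + 1) → F) × (Fin (k + 1) → F), (wa a.1 ^ 2 * wa a.2 ^ 2) *
              ((Finset.univ.filter (fun b : (Fin (k + 1) → F) × (Fin (k + 1) → F) =>
                Φ a.1 + Φ a.2 = Φ b.1 + Φ b.2)).card : ℝ)
          ≤ ∑ a : (Fin (k + 1) → F) × (Fin (k + 1) → F),
              (wa a.1 ^ 2 * wa a.2 ^ 2) * (2 * (q : ℝ) ^ k) := by
            refine Finset.sum_le_sum fun a _ => ?_
            refine mul_le_mul_of_nonneg_left ?_ (by positivity)
            calc ((Finset.univ.filter (fun b : (Fin (k + 1) → F) × (Fin (k + 1) → F) =>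
                  Φ a.1 + Φ a.2 = Φ b.1 + Φ b.2)).card : ℝ)
                ≤ ((2 * q ^ k : ℕ) : ℝ) := by exact_mod_cast hN a
              _ = 2 * (q : ℝ) ^ k := by push_cast; ring
        _ = 2 * (q : ℝ) ^ k * ∑ a : (Fin (k + 1) → F) × (Fin (k + 1) → F),
              wa a.1 ^ 2 * wa a.2 ^ 2 := by
            rw [← Finset.sum_mul]
            ring
        _ = 2 * (q : ℝ) ^ k * W ^ 2 := by
            congr 1
            rw [Fintype.sum_prod_type]
            have hred2 : ∀ x y : Fin (k + 1) → F,
                wa ((x, y) : (Fin (k + 1) → F) × (Fin (k + 1) → F)).1 ^ 2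
                  * wa ((x, y) : (Fin (k + 1) → F) × (Fin (k + 1) → F)).2 ^ 2
                = wa x ^ 2 * wa y ^ 2 := fun _ _ => rfl
            simp only [hred2]
            rw [← Finset.sum_mul_sum, hW]
            ring
    exact le_trans step1 (le_trans step2 step3)
  -- pass to real numbers
  have habs4 : ∀ z : ℂ, ((‖z‖ : ℂ)) ^ 4 = (z * (starRingEnd ℂ) z) ^ 2 := by
    intro z
    rw [Complex.mul_conj, Complex.normSq_eq_norm_sq]
    push_cast
    ring
  set A : ℝ := ∑ x : Fin (k + 2) → F, ‖E x‖ ^ 4 with hA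
  have hAnn : 0 ≤ A := Finset.sum_nonneg fun x _ => by positivity
  have hAC : (A : ℂ) = c ^ 4 * ((q : ℂ) ^ (k + 2) * Λ) := by
    rw [← keyC, hA]
    push_cast
    exact Finset.sum_congr rfl fun x _ => habs4 (E x)
  have hAval : A = ((q : ℝ) ^ (k + 1))⁻¹ ^ 4 * ((q : ℝ) ^ (k + 2) * ‖Λ‖) := by
    have h0 : A = ‖(A : ℂ)‖ := by rw [Complex.norm_real, Real.norm_of_nonneg hAnn]
    rw [h0, hAC]
    simp only [hc, norm_mul, norm_pow, norm_inv, Complex.norm_natCast]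
  have hqR : (0 : ℝ) < (q : ℝ) := by exact_mod_cast hq
  set B : ℝ := ((q : ℝ) ^ (k + 1))⁻¹ * W with hB
  have hBnn : 0 ≤ B := mul_nonneg (by positivity) hWnn
  have hfinal : A ≤ 2 * B ^ 2 := by
    have h1 : A ≤ ((q : ℝ) ^ (k + 1))⁻¹ ^ 4 * ((q : ℝ) ^ (k + 2) * (2 * (q : ℝ) ^ k * W ^ 2)) := by
      rw [hAval]
      refine mul_le_mul_of_nonneg_left ?_ (by positivity)
      exact mul_le_mul_of_nonneg_left habsΛ (by positivity)
    refine h1.trans (le_of_eq ?_)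
    have hqne : ((q : ℝ) ^ (k + 1)) ≠ 0 := by positivity
    rw [hB]
    field_simp
    ring
  -- final norm computation
  have e4 : ∀ r : ℝ, r ^ (4 : ℝ) = r ^ (4 : ℕ) := fun r => by
    rw [show (4 : ℝ) = ((4 : ℕ) : ℝ) by norm_num, Real.rpow_natCast]
  have e2 : ∀ r : ℝ, r ^ (2 : ℝ) = r ^ (2 : ℕ) := fun r => by
    rw [show (2 : ℝ) = ((2 : ℕ) : ℝ) by norm_num, Real.rpow_natCast]
  have hBsum : (((paraboloid F (k + 1)).card : ℝ))⁻¹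
      * ∑ ζ ∈ paraboloid F (k + 1), ‖g ζ‖ ^ (2 : ℕ) = B := by
    rw [hcard, hsumim (fun ζ => ‖g ζ‖ ^ (2 : ℕ)), hB, hW]
    push_cast
    rfl
  simp only [ambNorm, surfNorm]
  simp only [e4, e2]
  rw [hBsum, ← hA]
  calc A ^ ((1 : ℝ) / 4)
      ≤ (2 * B ^ 2) ^ ((1 : ℝ) / 4) :=
        Real.rpow_le_rpow hAnn hfinal (by norm_num)
    _ = (2 : ℝ) ^ ((1 : ℝ) / 4) * (B ^ 2) ^ ((1 : ℝ) / 4) :=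
        Real.mul_rpow (by norm_num) (sq_nonneg B)
    _ = (2 : ℝ) ^ ((1 : ℝ) / 4) * B ^ ((1 : ℝ) / 2) := by
        have hBpow : (B ^ (2 : ℕ)) ^ ((1 : ℝ) / 4) = B ^ ((1 : ℝ) / 2) := by
          rw [← Real.rpow_natCast B 2, ← Real.rpow_mul hBnn]
          norm_num
        rw [hBpow]
end

section
/- Let n ≥ 1, let S ⊆ F^n be nonempty, and define the Bochner–Riesz kernel K : F^n → ℂ by K(x) := |S|⁻¹ Σ_{ξ∈S} ψ(x·ξ) − δ₀(x), where δ₀(0) = 1 and δ₀(x) = 0 for x ≠ 0. Suppose d̃ > 0 and A ≥ 1 are such that |K(x)| ≤ A |F|^{−d̃/2} for all x ∈ F^n. Let p, q ≥ 2 and let C ≥ 0 be a constant such that ‖(g dσ)ˇ‖_{L^q(F^n,dx)} ≤ C ‖g‖_{L^p(S,dσ)} for all g : S → ℂ. Then for every θ ∈ (0,1) there is a constant c depending only on A and θ (in particular independent of F, S, n, p, q and C) such that ‖(g dσ)ˇ‖_{L^{q/θ}(F^n,dx)} ≤ c (1 + C^θ |F|^{−d̃(1−θ)/4}) ‖g‖_{L^p(S,dσ)}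 for all g : S → ℂ. -/
open scoped BigOperators
open Finset

/-- The Bochner–Riesz kernel `K(x) = (dσ)ˇ(x) − δ₀(x)`. -/
noncomputable def brKernel {F : Type*} [Field F] [Fintype F] [DecidableEq F] {m : ℕ}
    (ψ : AddChar F ℂ) (S : Finset (Fin m → F)) (x : Fin m → F) : ℂ :=
  extOp ψ S (fun _ => 1) x - (if x = 0 then 1 else 0)

/-- unnormalized Fourier sum -/
noncomputable def fhat {F : Type*} [Field F] [Fintype F] {m : ℕ}
    (ψ : AddChar F ℂ) (f : (Fin m → F) → ℂ) (ξ : Fin m → F) : ℂ :=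
  ∑ x : Fin m → F, f x * ψ (∑ i, x i * ξ i)

lemma pairing {F : Type*} [Field F] [Fintype F] {n : ℕ}
    (ψ : AddChar F ℂ) (S : Finset (Fin n → F)) (g f : (Fin n → F) → ℂ) :
    ∑ x : Fin n → F, extOp ψ S g x * f x
      = (S.card : ℂ)⁻¹ * ∑ ξ ∈ S, g ξ * fhat ψ f ξ := by
  simp only [extOp, fhat, Finset.mul_sum, Finset.sum_mul]
  rw [Finset.sum_comm]
  exact Finset.sum_congr rfl fun ξ _ => Finset.sum_congr rfl fun x _ => by ring

lemma st_key {F : Type*} [Field F] [Fintype F] [DecidableEq F] {n : ℕ}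
    (ψ : AddChar F ℂ) (S : Finset (Fin n → F)) (w : (Fin n → F) → ℂ) :
    (S.card : ℂ)⁻¹ * ∑ ξ ∈ S, fhat ψ w ξ * (starRingEnd ℂ) (fhat ψ w ξ)
      = (∑ x : Fin n → F, w x * (starRingEnd ℂ) (w x))
        + ∑ x : Fin n → F, ∑ y : Fin n → F,
            w x * (starRingEnd ℂ) (w y) * brKernel ψ S (x - y) := by
  classical
  have expand : ∀ ξ : Fin n → F, fhat ψ w ξ * (starRingEnd ℂ) (fhat ψ w ξ)
      = ∑ x : Fin n → F, ∑ y : Fin n → F,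
          (w x * (starRingEnd ℂ) (w y)) * ψ (∑ i, (x - y) i * ξ i) := by
    intro ξ
    rw [fhat, map_sum, Finset.sum_mul_sum]
    refine Finset.sum_congr rfl fun x _ => Finset.sum_congr rfl fun y _ => ?_
    have h1 : (starRingEnd ℂ) (w y * ψ (∑ i, y i * ξ i))
        = (starRingEnd ℂ) (w y) * ψ (-(∑ i, y i * ξ i)) := by
      rw [map_mul, AddChar.map_neg_eq_conj]
    rw [h1]
    have h2 : ψ (∑ i, x i * ξ i) * ψ (-(∑ i, y i * ξ i))
        = ψ (∑ i, (x - y) i * ξ i) := by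
      rw [← AddChar.map_add_eq_mul]
      congr 1
      rw [← sub_eq_add_neg, ← Finset.sum_sub_distrib]
      exact Finset.sum_congr rfl fun i _ => by simp [sub_mul]
    calc w x * ψ (∑ i, x i * ξ i) * ((starRingEnd ℂ) (w y) * ψ (-(∑ i, y i * ξ i)))
        = (w x * (starRingEnd ℂ) (w y)) * (ψ (∑ i, x i * ξ i) * ψ (-(∑ i, y i * ξ i))) := by ring
      _ = _ := by rw [h2]
  have rhs_eq : (∑ x : Fin n → F, w x * (starRingEnd ℂ) (w x))
        + ∑ x : Fin n → F, ∑ y : Fin n → F,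
            w x * (starRingEnd ℂ) (w y) * brKernel ψ S (x - y)
      = ∑ x : Fin n → F, ∑ y : Fin n → F,
          (w x * (starRingEnd ℂ) (w y)) * extOp ψ S (fun _ => 1) (x - y) := by
    have key : ∀ x y : Fin n → F, (w x * (starRingEnd ℂ) (w y)) * extOp ψ S (fun _ => 1) (x - y)
        = w x * (starRingEnd ℂ) (w y) * brKernel ψ S (x - y)
          + (if x = y then w x * (starRingEnd ℂ) (w y) else 0) := by
      intro x y
      rw [brKernel, mul_sub]
      by_cases h : x = y
      · simp [h]
      · have : x - y ≠ 0 := sub_ne_zero.2 h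
        simp [h, this]
    have diag : ∑ x : Fin n → F, ∑ y : Fin n → F,
        (if x = y then w x * (starRingEnd ℂ) (w y) else 0)
        = ∑ x : Fin n → F, w x * (starRingEnd ℂ) (w x) := by
      refine Finset.sum_congr rfl fun x _ => ?_
      rw [Finset.sum_ite_eq univ x (fun y => w x * (starRingEnd ℂ) (w y))]
      simp
    simp only [key, Finset.sum_add_distrib]
    rw [diag, add_comm]
  rw [rhs_eq]
  simp only [expand, extOp, one_mul, Finset.mul_sum]
  rw [Finset.sum_comm]
  refine Finset.sum_congr rfl fun x _ => ?_
  rw [Finset.sum_comm]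
  refine Finset.sum_congr rfl fun y _ => ?_
  exact Finset.sum_congr rfl fun ξ _ => by ring

lemma stein_tomas {F : Type*} [Field F] [Fintype F] [DecidableEq F] {n : ℕ}
    (ψ : AddChar F ℂ) (S : Finset (Fin n → F)) {ε : ℝ}
    (hK : ∀ x : Fin n → F, ‖brKernel ψ S x‖ ≤ ε) (w : (Fin n → F) → ℂ) :
    (S.card : ℝ)⁻¹ * ∑ ξ ∈ S, ‖fhat ψ w ξ‖ ^ (2:ℝ)
      ≤ (∑ x : Fin n → F, ‖w x‖ ^ (2:ℝ))
        + ε * (∑ x : Fin n → F, ‖w x‖) ^ (2:ℝ) := by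
  classical
  have habs2 : ∀ z : ℂ, ‖z‖ ^ (2:ℝ) = Complex.normSq z := by
    intro z
    rw [show (2:ℝ) = ((2:ℕ):ℝ) by norm_num, Real.rpow_natCast, Complex.sq_norm]
  set L : ℝ := (S.card : ℝ)⁻¹ * ∑ ξ ∈ S, ‖fhat ψ w ξ‖ ^ (2:ℝ) with hL
  set W2 : ℝ := ∑ x : Fin n → F, ‖w x‖ ^ (2:ℝ) with hW2
  set W1 : ℝ := ∑ x : Fin n → F, ‖w x‖ with hW1
  have cast_eq : ((L : ℝ) : ℂ)
      = (S.card : ℂ)⁻¹ * ∑ ξ ∈ S, fhat ψ w ξ * (starRingEnd ℂ) (fhat ψ w ξ) := by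
    simp only [hL, habs2, Complex.mul_conj]
    push_cast
    ring
  have cast_w : (∑ x : Fin n → F, w x * (starRingEnd ℂ) (w x)) = ((W2 : ℝ) : ℂ) := by
    simp only [hW2, habs2, Complex.mul_conj]
    push_cast
    ring
  have key : ((L - W2 : ℝ) : ℂ)
      = ∑ x : Fin n → F, ∑ y : Fin n → F,
          w x * (starRingEnd ℂ) (w y) * brKernel ψ S (x - y) := by
    rw [Complex.ofReal_sub, cast_eq, st_key, cast_w]
    ring
  have hre : L - W2 ≤ ‖((L - W2 : ℝ) : ℂ)‖ := by
    rw [Complex.norm_real, Real.norm_eq_abs]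
    exact le_abs_self _
  have habs : ‖((L - W2 : ℝ) : ℂ)‖ ≤ ε * W1 ^ (2:ℝ) := by
    rw [key]
    have step : ∀ x : Fin n → F,
        ‖∑ y : Fin n → F, w x * (starRingEnd ℂ) (w y) * brKernel ψ S (x - y)‖
          ≤ ∑ y : Fin n → F, ‖w x‖ * ‖w y‖ * ε := by
      intro x
      refine le_trans (norm_sum_le _ _) (Finset.sum_le_sum fun y _ => ?_)
      rw [norm_mul, norm_mul, Complex.norm_conj]
      exact mul_le_mul_of_nonneg_left (hK _) (by positivity)
    calc ‖∑ x : Fin n → F, ∑ y : Fin n → F,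
            w x * (starRingEnd ℂ) (w y) * brKernel ψ S (x - y)‖
        ≤ ∑ x : Fin n → F, ‖∑ y : Fin n → F,
            w x * (starRingEnd ℂ) (w y) * brKernel ψ S (x - y)‖ := norm_sum_le _ _
      _ ≤ ∑ x : Fin n → F, ∑ y : Fin n → F,
            ‖w x‖ * ‖w y‖ * ε := Finset.sum_le_sum fun x _ => step x
      _ = ε * W1 ^ (2:ℝ) := by
          rw [show W1 ^ (2:ℝ) = W1 * W1 by
            rw [show (2:ℝ) = ((2:ℕ):ℝ) by norm_num, Real.rpow_natCast]; ring]
          rw [hW1, Finset.sum_mul_sum]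
          rw [Finset.mul_sum]
          refine Finset.sum_congr rfl fun x _ => ?_
          rw [Finset.mul_sum]
          exact Finset.sum_congr rfl fun y _ => by ring
  linarith [le_trans hre habs]
lemma rpow_half_add_le (a b : ℝ) (ha : 0 ≤ a) (hb : 0 ≤ b) :
    (a + b) ^ ((1:ℝ)/2) ≤ a ^ ((1:ℝ)/2) + b ^ ((1:ℝ)/2) := by
  have h2 : ∀ x : ℝ, 0 ≤ x → (x ^ ((1:ℝ)/2)) ^ (2:ℕ) = x := by
    intro x hx
    rw [← Real.rpow_natCast (x ^ ((1:ℝ)/2)) 2, ← Real.rpow_mul hx]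
    norm_num
  have key : a + b ≤ (a ^ ((1:ℝ)/2) + b ^ ((1:ℝ)/2)) ^ (2:ℕ) := by
    have h2a := h2 a ha
    have h2b := h2 b hb
    nlinarith [Real.rpow_nonneg ha ((1:ℝ)/2), Real.rpow_nonneg hb ((1:ℝ)/2)]
  calc (a + b) ^ ((1:ℝ)/2)
      ≤ ((a ^ ((1:ℝ)/2) + b ^ ((1:ℝ)/2)) ^ (2:ℕ)) ^ ((1:ℝ)/2) :=
        Real.rpow_le_rpow (by positivity) key (by norm_num)
    _ = a ^ ((1:ℝ)/2) + b ^ ((1:ℝ)/2) := by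
        rw [← Real.rpow_natCast (a ^ ((1:ℝ)/2) + b ^ ((1:ℝ)/2)) 2,
          ← Real.rpow_mul (by positivity)]
        norm_num

lemma pow_mean_le {ι : Type*} (S : Finset ι) (hSc0 : 0 < (S.card:ℝ)) (u : ι → ℝ)
    (hu : ∀ ξ, 0 ≤ u ξ) {c : ℝ} (hc0 : 0 < c) (hc2 : c ≤ 2) :
    ((S.card:ℝ)⁻¹ * ∑ ξ ∈ S, u ξ ^ c) ^ (1/c)
      ≤ ((S.card:ℝ)⁻¹ * ∑ ξ ∈ S, u ξ ^ (2:ℝ)) ^ ((1:ℝ)/2) := by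
  set t : ℝ := 2 / c with htdef
  have ht1 : 1 ≤ t := by
    rw [htdef, le_div_iff₀ hc0]; linarith
  have hcinv : (0:ℝ) ≤ (S.card:ℝ)⁻¹ := inv_nonneg.mpr hSc0.le
  have hw := Real.inner_le_weight_mul_Lp_of_nonneg S (p := t) ht1 (fun _ => (S.card:ℝ)⁻¹)
    (fun ξ => u ξ ^ c) (fun _ => hcinv) (fun ξ => Real.rpow_nonneg (hu ξ) _)
  have hsum_c : ∑ _ξ ∈ S, (S.card:ℝ)⁻¹ = 1 := by
    rw [Finset.sum_const, nsmul_eq_mul, mul_inv_cancel₀ hSc0.ne']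
  have hpt2 : ∀ ξ : ι, ((u ξ) ^ c) ^ t = u ξ ^ (2:ℝ) := by
    intro ξ
    rw [← Real.rpow_mul (hu ξ)]
    congr 1
    rw [htdef]
    field_simp
    all_goals ring
  rw [hsum_c, Real.one_rpow, one_mul] at hw
  simp only [hpt2] at hw
  rw [← Finset.mul_sum, ← Finset.mul_sum] at hw
  have hb1 : (0:ℝ) ≤ (S.card:ℝ)⁻¹ * ∑ ξ ∈ S, u ξ ^ c :=
    mul_nonneg hcinv (Finset.sum_nonneg fun ξ _ => Real.rpow_nonneg (hu ξ) _)
  have hb2 : (0:ℝ) ≤ (S.card:ℝ)⁻¹ * ∑ ξ ∈ S, u ξ ^ (2:ℝ) :=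
    mul_nonneg hcinv (Finset.sum_nonneg fun ξ _ => Real.rpow_nonneg (hu ξ) _)
  calc ((S.card:ℝ)⁻¹ * ∑ ξ ∈ S, u ξ ^ c) ^ (1/c)
      ≤ (((S.card:ℝ)⁻¹ * ∑ ξ ∈ S, u ξ ^ (2:ℝ)) ^ t⁻¹) ^ (1/c) :=
        Real.rpow_le_rpow hb1 hw (le_of_lt (one_div_pos.mpr hc0))
    _ = _ := by
        rw [← Real.rpow_mul hb2]
        congr 1
        rw [htdef]
        field_simp
        all_goals ring

lemma B1bound {F : Type*} [Field F] [Fintype F] [DecidableEq F] {n : ℕ}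
    (ψ : AddChar F ℂ) (S : Finset (Fin n → F)) (hSc0 : 0 < (S.card:ℝ))
    {ε : ℝ} (hε0 : 0 ≤ ε) (hK : ∀ x : Fin n → F, ‖brKernel ψ S x‖ ≤ ε)
    (g f1 : (Fin n → F) → ℂ) {p p' : ℝ} (hconjp : Real.HolderConjugate p p')
    (hp'2 : p' ≤ 2) {T Z : ℝ} (hT0 : 0 ≤ T) (hZ0 : 0 ≤ Z)
    (hE1 : ∑ x : Fin n → F, ‖f1 x‖ ^ (2:ℝ) ≤ T ^ (2:ℝ))
    (hE2 : ∑ x : Fin n → F, ‖f1 x‖ ≤ Z) :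
    ‖∑ x : Fin n → F, extOp ψ S g x * f1 x‖
      ≤ surfNorm p S g * (T + ε ^ ((1:ℝ)/2) * Z) := by
  have hp'0 : 0 < p' := hconjp.symm.pos
  have hcinv : (0:ℝ) ≤ (S.card:ℝ)⁻¹ := inv_nonneg.mpr hSc0.le
  have habsnn : ∀ z : ℂ, (0:ℝ) ≤ ‖z‖ := fun z => norm_nonneg z
  have hsumg : (0:ℝ) ≤ ∑ ξ ∈ S, ‖g ξ‖ ^ p :=
    Finset.sum_nonneg fun ξ _ => Real.rpow_nonneg (habsnn _) _
  have hsump' : (0:ℝ) ≤ ∑ ξ ∈ S, ‖fhat ψ f1 ξ‖ ^ p' :=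
    Finset.sum_nonneg fun ξ _ => Real.rpow_nonneg (habsnn _) _
  have hσ0 : 0 ≤ surfNorm p S g := by
    rw [surfNorm]
    exact Real.rpow_nonneg (mul_nonneg hcinv hsumg) _
  have hP2 : ((S.card:ℝ)⁻¹ * ∑ ξ ∈ S, ‖fhat ψ f1 ξ‖ ^ p') ^ (1/p')
      ≤ T + ε ^ ((1:ℝ)/2) * Z := by
    have hpm := pow_mean_le S hSc0 (fun ξ => ‖fhat ψ f1 ξ‖)
      (fun ξ => habsnn _) hp'0 hp'2
    have hst := stein_tomas ψ S hK f1
    have hZsq : (∑ x : Fin n → F, ‖f1 x‖) ^ (2:ℝ) ≤ Z ^ (2:ℝ) :=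
      Real.rpow_le_rpow (Finset.sum_nonneg fun x _ => habsnn _) hE2 (by norm_num)
    have hY : (S.card:ℝ)⁻¹ * ∑ ξ ∈ S, ‖fhat ψ f1 ξ‖ ^ (2:ℝ)
        ≤ T ^ (2:ℝ) + ε * Z ^ (2:ℝ) := by
      refine le_trans hst ?_
      have h2 := mul_le_mul_of_nonneg_left hZsq hε0
      linarith [hE1]
    have hb2 : (0:ℝ) ≤ (S.card:ℝ)⁻¹ * ∑ ξ ∈ S, ‖fhat ψ f1 ξ‖ ^ (2:ℝ) :=
      mul_nonneg hcinv (Finset.sum_nonneg fun ξ _ => Real.rpow_nonneg (habsnn _) _)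
    calc ((S.card:ℝ)⁻¹ * ∑ ξ ∈ S, ‖fhat ψ f1 ξ‖ ^ p') ^ (1/p')
        ≤ ((S.card:ℝ)⁻¹ * ∑ ξ ∈ S, ‖fhat ψ f1 ξ‖ ^ (2:ℝ)) ^ ((1:ℝ)/2) := hpm
      _ ≤ (T ^ (2:ℝ) + ε * Z ^ (2:ℝ)) ^ ((1:ℝ)/2) :=
          Real.rpow_le_rpow hb2 hY (by norm_num)
      _ ≤ (T ^ (2:ℝ)) ^ ((1:ℝ)/2) + (ε * Z ^ (2:ℝ)) ^ ((1:ℝ)/2) :=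
          rpow_half_add_le _ _ (Real.rpow_nonneg hT0 _)
            (mul_nonneg hε0 (Real.rpow_nonneg hZ0 _))
      _ = T + ε ^ ((1:ℝ)/2) * Z := by
          rw [Real.mul_rpow hε0 (Real.rpow_nonneg hZ0 _),
            ← Real.rpow_mul hT0, ← Real.rpow_mul hZ0]
          norm_num
  have habsinv : ‖(S.card : ℂ)⁻¹‖ = (S.card : ℝ)⁻¹ := by
    rw [norm_inv, Complex.norm_natCast]
  rw [pairing ψ S g f1]
  calc ‖(S.card : ℂ)⁻¹ * ∑ ξ ∈ S, g ξ * fhat ψ f1 ξ‖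
      = (S.card:ℝ)⁻¹ * ‖∑ ξ ∈ S, g ξ * fhat ψ f1 ξ‖ := by
        rw [norm_mul, habsinv]
    _ ≤ (S.card:ℝ)⁻¹ * ∑ ξ ∈ S, ‖g ξ‖ * ‖fhat ψ f1 ξ‖ := by
        refine mul_le_mul_of_nonneg_left ?_ hcinv
        refine le_trans (norm_sum_le _ _) (le_of_eq ?_)
        exact Finset.sum_congr rfl fun ξ _ => norm_mul _ _
    _ ≤ (S.card:ℝ)⁻¹ * ((∑ ξ ∈ S, ‖g ξ‖ ^ p) ^ (1/p)
          * (∑ ξ ∈ S, ‖fhat ψ f1 ξ‖ ^ p') ^ (1/p')) := by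
        refine mul_le_mul_of_nonneg_left ?_ hcinv
        exact Real.inner_le_Lp_mul_Lq_of_nonneg S hconjp (fun i _ => habsnn _)
          (fun i _ => habsnn _)
    _ = ((S.card:ℝ)⁻¹ * ∑ ξ ∈ S, ‖g ξ‖ ^ p) ^ (1/p)
          * ((S.card:ℝ)⁻¹ * ∑ ξ ∈ S, ‖fhat ψ f1 ξ‖ ^ p') ^ (1/p') := by
        have hcc : ((S.card:ℝ)⁻¹) ^ ((1:ℝ)/p) * ((S.card:ℝ)⁻¹) ^ ((1:ℝ)/p') = (S.card:ℝ)⁻¹ := by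
          rw [← Real.rpow_add (inv_pos.mpr hSc0),
            (show 1/p + 1/p' = 1 by rw [one_div, one_div]; exact hconjp.inv_add_inv_eq_one),
            Real.rpow_one]
        rw [Real.mul_rpow hcinv hsumg, Real.mul_rpow hcinv hsump']
        calc (S.card:ℝ)⁻¹ * ((∑ ξ ∈ S, ‖g ξ‖ ^ p) ^ (1/p)
              * (∑ ξ ∈ S, ‖fhat ψ f1 ξ‖ ^ p') ^ (1/p'))
            = (((S.card:ℝ)⁻¹) ^ ((1:ℝ)/p) * ((S.card:ℝ)⁻¹) ^ ((1:ℝ)/p'))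
              * ((∑ ξ ∈ S, ‖g ξ‖ ^ p) ^ (1/p)
              * (∑ ξ ∈ S, ‖fhat ψ f1 ξ‖ ^ p') ^ (1/p')) := by rw [hcc]
          _ = ((S.card:ℝ)⁻¹ ^ ((1:ℝ)/p) * (∑ ξ ∈ S, ‖g ξ‖ ^ p) ^ (1/p))
              * ((S.card:ℝ)⁻¹ ^ ((1:ℝ)/p')
              * (∑ ξ ∈ S, ‖fhat ψ f1 ξ‖ ^ p') ^ (1/p')) := by ring
    _ = surfNorm p S g
          * ((S.card:ℝ)⁻¹ * ∑ ξ ∈ S, ‖fhat ψ f1 ξ‖ ^ p') ^ (1/p') := by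
        rw [surfNorm]
    _ ≤ surfNorm p S g * (T + ε ^ ((1:ℝ)/2) * Z) := mul_le_mul_of_nonneg_left hP2 hσ0
set_option maxHeartbeats 4000000 in
theorem statement5 (A : ℝ) (hA : 1 ≤ A) (θ : ℝ) (hθ0 : 0 < θ) (hθ1 : θ < 1) :
    ∃ c : ℝ, ∀ (F : Type) [Field F] [Fintype F] [DecidableEq F],
      ringChar F ≠ 2 →
      ∀ (ψ : AddChar F ℂ), (∃ a, ψ a ≠ 1) →
      ∀ (n : ℕ), 1 ≤ n →
      ∀ (S : Finset (Fin n → F)), S.Nonempty →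
      ∀ (dtil : ℝ), 0 < dtil →
      (∀ x : Fin n → F,
        ‖brKernel ψ S x‖ ≤ A * (Fintype.card F : ℝ) ^ (-dtil / 2)) →
      ∀ (p q : ℝ), 2 ≤ p → 2 ≤ q →
      ∀ (C : ℝ), 0 ≤ C →
      (∀ g : (Fin n → F) → ℂ, ambNorm q (extOp ψ S g) ≤ C * surfNorm p S g) →
      ∀ g : (Fin n → F) → ℂ,
        ambNorm (q / θ) (extOp ψ S g) ≤
          c * (1 + C ^ θ * (Fintype.card F : ℝ) ^ (-(dtil * (1 - θ)) / 4)) * surfNorm p S g := by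
  classical
  refine ⟨1 + A ^ ((1:ℝ)/2), ?_⟩
  intro F _ _ _ hchar ψ hψ n hn S hS dtil hdtil hK p q hp hq C hC0 hyp g
  have hA0 : (0:ℝ) < A := lt_of_lt_of_le one_pos hA
  have hsA0 : (0:ℝ) ≤ A ^ ((1:ℝ)/2) := Real.rpow_nonneg hA0.le _
  set N : ℝ := (Fintype.card F : ℝ) with hNdef
  have hN0 : (0:ℝ) < N := by
    rw [hNdef]; exact_mod_cast Fintype.card_pos
  have hSc0 : (0:ℝ) < (S.card : ℝ) := by exact_mod_cast Finset.card_pos.mpr hS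
  set D : ℝ := N ^ (-dtil/4) with hDdef
  clear_value D
  have hD0 : (0:ℝ) < D := by rw [hDdef]; exact Real.rpow_pos_of_pos hN0 _
  set ε : ℝ := A * N ^ (-dtil/2) with hεdef
  clear_value ε
  have hε0 : (0:ℝ) ≤ ε := by
    rw [hεdef]; exact mul_nonneg hA0.le (Real.rpow_nonneg hN0.le _)
  have hsqrtε : ε ^ ((1:ℝ)/2) = A ^ ((1:ℝ)/2) * D := by
    rw [hεdef, Real.mul_rpow hA0.le (Real.rpow_nonneg hN0.le _), hDdef, ← Real.rpow_mul hN0.le]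
    have : -dtil/2 * (1/2) = -dtil/4 := by ring
    rw [this]
  -- surfNorm of g
  set σ : ℝ := surfNorm p S g with hσdef
  clear_value σ
  have hσ0 : (0:ℝ) ≤ σ := by
    rw [hσdef, surfNorm]; positivity
  -- exponent bookkeeping
  have hq0 : (0:ℝ) < q := by linarith
  have hp0 : (0:ℝ) < p := by linarith
  have hp1 : (0:ℝ) < p - 1 := by linarith
  have hq1 : (0:ℝ) < q - 1 := by linarith
  have hqθ : (0:ℝ) < q - θ := by linarith
  set r : ℝ := q / θ with hrdef
  set s : ℝ := q / (q - θ) with hsdef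
  set p' : ℝ := p / (p - 1) with hp'def
  set q' : ℝ := q / (q - 1) with hq'def
  clear_value r s p' q'
  have hr0 : (0:ℝ) < r := by rw [hrdef]; exact div_pos hq0 hθ0
  have hs0 : (0:ℝ) < s := by rw [hsdef]; exact div_pos hq0 hqθ
  have hp'0 : (0:ℝ) < p' := by rw [hp'def]; exact div_pos hp0 hp1
  have hq'0 : (0:ℝ) < q' := by rw [hq'def]; exact div_pos hq0 hq1
  have hs1 : 1 < s := by
    rw [hsdef]; rw [lt_div_iff₀ hqθ]; linarith
  have hs2 : s < 2 := by
    rw [hsdef, div_lt_iff₀ hqθ]; linarith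
  have hr2 : (2:ℝ) < r := by
    rw [hrdef, lt_div_iff₀ hθ0]
    have h1 : 2 * θ < 2 := by linarith
    linarith
  have hsq' : s < q' := by
    rw [hsdef, hq'def, div_lt_div_iff₀ hqθ hq1]
    have h1 := mul_lt_mul_of_pos_left (show q - 1 < q - θ by linarith) hq0
    linarith
  have hconjq : Real.HolderConjugate q q' := by
    rw [Real.holderConjugate_iff]; constructor
    · linarith
    · rw [hq'def]; field_simp; ring
  have hconjp : Real.HolderConjugate p p' := by
    rw [Real.holderConjugate_iff]; constructor
    · linarith
    · rw [hp'def]; field_simp; ring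
  have hp'2 : p' ≤ 2 := by
    rw [hp'def, div_le_iff₀ hp1]; linarith
  have hqs : q / s = q - θ := by
    rw [hsdef]; field_simp
  have hrs : (r - 1) * s = r := by
    rw [hrdef, hsdef]; field_simp; all_goals ring
  have hinv_sr : 1/s + 1/r = 1 := by
    rw [hrdef, hsdef]; field_simp; all_goals ring
  have he1 : (q/s) * (1 - s) = -θ := by
    rw [hqs, hsdef]; field_simp; all_goals ring
  have he2 : (q/s) * ((q' - s)/q') = 1 - θ := by
    rw [hqs, hsdef, hq'def]; field_simp; all_goals ring
  -- C ≥ 1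
  have hC1 : (1:ℝ) ≤ C := by
    have hone := hyp (fun _ => 1)
    have hsurf1 : surfNorm p S (fun _ => 1) = 1 := by
      rw [surfNorm]
      simp only [norm_one, Real.one_rpow]
      rw [Finset.sum_const, nsmul_eq_mul, mul_one, inv_mul_cancel₀ hSc0.ne', Real.one_rpow]
    have hval : extOp ψ S (fun _ => 1) 0 = 1 := by
      rw [extOp]
      have : ∀ ξ ∈ S, (fun _ : Fin n → F => (1:ℂ)) ξ * ψ (∑ i, (0 : Fin n → F) i * ξ i) = 1 := by
        intro ξ _
        simp [AddChar.map_zero_eq_one]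
      rw [Finset.sum_congr rfl this, Finset.sum_const, nsmul_eq_mul, mul_one,
        inv_mul_cancel₀]
      exact_mod_cast hSc0.ne'
    have hamb : (1:ℝ) ≤ ambNorm q (extOp ψ S (fun _ => 1)) := by
      rw [ambNorm]
      have h0 : (1:ℝ) ≤ ∑ x : Fin n → F, ‖extOp ψ S (fun _ => 1) x‖ ^ q := by
        have hle := Finset.single_le_sum
          (f := fun x : Fin n → F => ‖extOp ψ S (fun _ => 1) x‖ ^ q)
          (fun i _ => by positivity) (Finset.mem_univ 0)
        calc (1:ℝ) = ‖extOp ψ S (fun _ => 1) 0‖ ^ q := by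
              rw [hval]; simp [Real.one_rpow]
          _ ≤ _ := hle
      calc (1:ℝ) = 1 ^ (1/q) := (Real.one_rpow _).symm
        _ ≤ _ := Real.rpow_le_rpow zero_le_one h0 (by positivity)
    rw [hsurf1, mul_one] at hone
    linarith
  have hCpos : (0:ℝ) < C := lt_of_lt_of_le one_pos hC1
  set h : (Fin n → F) → ℂ := extOp ψ S g with hhdef
  have hgoalE : D ^ (1 - θ) = N ^ (-(dtil * (1 - θ)) / 4) := by
    rw [hDdef, ← Real.rpow_mul hN0.le]
    congr 1
    ring
  set E : ℝ := C ^ θ * D ^ (1 - θ) with hEdef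
  have hE0 : (0:ℝ) ≤ E :=
    mul_nonneg (Real.rpow_nonneg hC0 _) (Real.rpow_nonneg hD0.le _)
  have hyph : (∑ x : Fin n → F, ‖h x‖ ^ q) ^ (1/q) ≤ C * σ := by
    have hq' := hyp g
    rw [ambNorm] at hq'
    rw [hhdef, hσdef]
    exact hq'
  have habsnn : ∀ z : ℂ, (0:ℝ) ≤ ‖z‖ := fun z => norm_nonneg z
  simp only [ambNorm]
  have hgoal2 : (1 + A ^ ((1:ℝ)/2)) * (1 + C ^ θ * N ^ (-(dtil * (1 - θ)) / 4)) * σ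
      = (1 + A ^ ((1:ℝ)/2)) * (1 + E) * σ := by rw [hEdef, hgoalE]
  rw [hgoal2]
  clear_value h E
  set R : ℝ := ∑ x : Fin n → F, ‖h x‖ ^ r with hRdef
  clear_value R
  have hR0 : (0:ℝ) ≤ R := by
    rw [hRdef]; exact Finset.sum_nonneg fun x _ => Real.rpow_nonneg (habsnn _) _
  rcases eq_or_lt_of_le hR0 with hR | hR
  · rw [← hR, Real.zero_rpow (ne_of_gt (one_div_pos.mpr hr0))]
    exact mul_nonneg (mul_nonneg (by linarith) (by linarith [hE0])) hσ0
  · -- main case : R > 0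
    set T : ℝ := R ^ (1/s) with hTdef
    clear_value T
    have hT0 : (0:ℝ) < T := by rw [hTdef]; exact Real.rpow_pos_of_pos hR _
    have hTs : T ^ s = R := by
      rw [hTdef, ← Real.rpow_mul hR.le, one_div_mul_cancel hs0.ne', Real.rpow_one]
    set μ : ℝ := (D / C) ^ (q / s) with hμdef
    clear_value μ
    have hμ0 : (0:ℝ) < μ := by rw [hμdef]; exact Real.rpow_pos_of_pos (div_pos hD0 hCpos) _
    set Λ : ℝ := μ * T with hΛdef
    clear_value Λ
    have hΛ0 : (0:ℝ) < Λ := by rw [hΛdef]; exact mul_pos hμ0 hT0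
    set f : (Fin n → F) → ℂ :=
      fun x => ((‖h x‖ ^ (r-2) : ℝ) : ℂ) * (starRingEnd ℂ) (h x) with hfdef
    clear_value f
    have habsf : ∀ x, ‖f x‖ = ‖h x‖ ^ (r - 1) := by
      intro x
      simp only [hfdef, norm_mul, Complex.norm_real, Real.norm_eq_abs, Complex.norm_conj]
      rw [abs_of_nonneg (Real.rpow_nonneg (habsnn _) _)]
      rcases eq_or_ne (h x) 0 with h0 | h0
      · rw [h0]
        simp only [norm_zero, mul_zero]
        rw [Real.zero_rpow (ne_of_gt (by linarith : (0:ℝ) < r - 1))]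
      · have habs0 : 0 < ‖h x‖ := norm_pos_iff.mpr h0
        conv_rhs => rw [show r - 1 = (r-2) + 1 by ring, Real.rpow_add habs0, Real.rpow_one]
    have hhf : ∀ x, h x * f x = ((‖h x‖ ^ r : ℝ) : ℂ) := by
      intro x
      simp only [hfdef]
      rcases eq_or_ne (h x) 0 with h0 | h0
      · rw [h0]
        simp only [map_zero, norm_zero, mul_zero, zero_mul]
        rw [Real.zero_rpow hr0.ne']
        simp
      · have habs0 : 0 < ‖h x‖ := norm_pos_iff.mpr h0
        calc h x * (((‖h x‖ ^ (r-2) : ℝ) : ℂ) * (starRingEnd ℂ) (h x))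
            = ((‖h x‖ ^ (r-2) : ℝ) : ℂ) * (h x * (starRingEnd ℂ) (h x)) := by ring
          _ = ((‖h x‖ ^ (r-2) : ℝ) : ℂ) * ((Complex.normSq (h x) : ℝ) : ℂ) := by
              rw [Complex.mul_conj]
          _ = ((‖h x‖ ^ (r-2) * Complex.normSq (h x) : ℝ) : ℂ) := by
              push_cast; ring
          _ = _ := by
              congr 1
              rw [Complex.normSq_eq_norm_sq, ← Real.rpow_natCast (‖h x‖) 2,
                ← Real.rpow_add habs0]
              congr 1
              push_cast
              ring
    have hfs : ∑ x : Fin n → F, ‖f x‖ ^ s = R := by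
      rw [hRdef]
      refine Finset.sum_congr rfl fun x _ => ?_
      rw [habsf x, ← Real.rpow_mul (habsnn _), hrs]
    set f1 : (Fin n → F) → ℂ := fun x => if Λ < ‖f x‖ then f x else 0 with hf1def
    set f2 : (Fin n → F) → ℂ := fun x => if Λ < ‖f x‖ then 0 else f x with hf2def
    clear_value f1 f2
    have hsplit : ∀ x, f x = f1 x + f2 x := by
      intro x
      simp only [hf1def, hf2def]
      by_cases hx : Λ < ‖f x‖ <;> simp [hx]
    have hE1 : ∑ x : Fin n → F, ‖f1 x‖ ^ (2:ℝ) ≤ T ^ (2:ℝ) := by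
      have hfT : ∀ x, ‖f x‖ ≤ T := by
        intro x
        have h1 : ‖f x‖ ^ s ≤ R := by
          rw [← hfs]
          exact Finset.single_le_sum (f := fun x => ‖f x‖ ^ s)
            (fun i _ => Real.rpow_nonneg (habsnn _) _) (Finset.mem_univ x)
        calc ‖f x‖ = (‖f x‖ ^ s) ^ (1/s) := by
              rw [← Real.rpow_mul (habsnn _), mul_one_div_cancel hs0.ne', Real.rpow_one]
          _ ≤ R ^ (1/s) := Real.rpow_le_rpow (Real.rpow_nonneg (habsnn _) _) h1
              (le_of_lt (one_div_pos.mpr hs0))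
          _ = T := hTdef.symm
      have hpt : ∀ x, ‖f1 x‖ ^ (2:ℝ) ≤ ‖f x‖ ^ s * T ^ (2 - s) := by
        intro x
        have hle : ‖f1 x‖ ≤ ‖f x‖ := by
          simp only [hf1def]
          by_cases hx : Λ < ‖f x‖ <;> simp [hx]
        rcases eq_or_ne (‖f x‖) 0 with h0 | h0
        · have hz : ‖f1 x‖ = 0 := le_antisymm (h0 ▸ hle) (habsnn _)
          rw [hz, h0, Real.zero_rpow (by norm_num : (2:ℝ) ≠ 0), Real.zero_rpow hs0.ne',
            zero_mul]
        · have hfx0 : 0 < ‖f x‖ := lt_of_le_of_ne (habsnn _) (Ne.symm h0)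
          calc ‖f1 x‖ ^ (2:ℝ) ≤ ‖f x‖ ^ (2:ℝ) :=
                Real.rpow_le_rpow (habsnn _) hle (by norm_num)
            _ = ‖f x‖ ^ s * ‖f x‖ ^ (2 - s) := by
                rw [← Real.rpow_add hfx0]; congr 1; ring
            _ ≤ ‖f x‖ ^ s * T ^ (2 - s) := by
                refine mul_le_mul_of_nonneg_left ?_ (Real.rpow_nonneg (habsnn _) _)
                exact Real.rpow_le_rpow (habsnn _) (hfT x) (by linarith)
      calc ∑ x : Fin n → F, ‖f1 x‖ ^ (2:ℝ)
          ≤ ∑ x : Fin n → F, ‖f x‖ ^ s * T ^ (2-s) :=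
            Finset.sum_le_sum fun x _ => hpt x
        _ = R * T ^ (2-s) := by rw [← Finset.sum_mul, hfs]
        _ = T ^ (2:ℝ) := by
            rw [← hTs, ← Real.rpow_add hT0]; congr 1; ring
    have hE2 : ∑ x : Fin n → F, ‖f1 x‖ ≤ Λ ^ (1 - s) * R := by
      have hpt : ∀ x, ‖f1 x‖ ≤ Λ ^ (1-s) * ‖f x‖ ^ s := by
        intro x
        simp only [hf1def]
        by_cases hx : Λ < ‖f x‖
        · simp only [if_pos hx]
          have hfx0 : 0 < ‖f x‖ := lt_trans hΛ0 hx
          calc ‖f x‖ = ‖f x‖ ^ (1-s) * ‖f x‖ ^ s := by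
                rw [← Real.rpow_add hfx0]
                have h1 : 1 - s + s = 1 := by ring
                rw [h1, Real.rpow_one]
            _ ≤ Λ ^ (1-s) * ‖f x‖ ^ s := by
                refine mul_le_mul_of_nonneg_right ?_ (Real.rpow_nonneg (habsnn _) _)
                exact Real.rpow_le_rpow_of_nonpos hΛ0 hx.le (by linarith)
        · simp only [if_neg hx, norm_zero]
          exact mul_nonneg (Real.rpow_nonneg hΛ0.le _) (Real.rpow_nonneg (habsnn _) _)
      calc ∑ x : Fin n → F, ‖f1 x‖
          ≤ ∑ x : Fin n → F, Λ ^ (1-s) * ‖f x‖ ^ s :=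
            Finset.sum_le_sum fun x _ => hpt x
        _ = Λ ^ (1-s) * R := by rw [← Finset.mul_sum, hfs]
    have hE3 : ∑ x : Fin n → F, ‖f2 x‖ ^ q' ≤ Λ ^ (q' - s) * R := by
      have hpt : ∀ x, ‖f2 x‖ ^ q' ≤ Λ ^ (q'-s) * ‖f x‖ ^ s := by
        intro x
        simp only [hf2def]
        by_cases hx : Λ < ‖f x‖
        · simp only [if_pos hx, norm_zero]
          rw [Real.zero_rpow hq'0.ne']
          exact mul_nonneg (Real.rpow_nonneg hΛ0.le _) (Real.rpow_nonneg (habsnn _) _)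
        · simp only [if_neg hx]
          push_neg at hx
          rcases eq_or_ne (‖f x‖) 0 with h0 | h0
          · rw [h0, Real.zero_rpow hq'0.ne', Real.zero_rpow hs0.ne', mul_zero]
          · have hfx0 : 0 < ‖f x‖ := lt_of_le_of_ne (habsnn _) (Ne.symm h0)
            calc ‖f x‖ ^ q'
                = ‖f x‖ ^ (q'-s) * ‖f x‖ ^ s := by
                  rw [← Real.rpow_add hfx0]; congr 1; ring
              _ ≤ Λ ^ (q'-s) * ‖f x‖ ^ s := by
                  refine mul_le_mul_of_nonneg_right ?_ (Real.rpow_nonneg (habsnn _) _)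
                  exact Real.rpow_le_rpow (habsnn _) hx (by linarith)
      calc ∑ x : Fin n → F, ‖f2 x‖ ^ q'
          ≤ ∑ x : Fin n → F, Λ ^ (q'-s) * ‖f x‖ ^ s :=
            Finset.sum_le_sum fun x _ => hpt x
        _ = Λ ^ (q'-s) * R := by rw [← Finset.mul_sum, hfs]
    have hZ0 : (0:ℝ) ≤ Λ ^ (1-s) * R := mul_nonneg (Real.rpow_nonneg hΛ0.le _) hR0
    have hpair_f : (∑ x : Fin n → F, h x * f x) = ((R:ℝ):ℂ) := by
      rw [hRdef, Complex.ofReal_sum]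
      exact Finset.sum_congr rfl fun x _ => hhf x
    have hRabs : R = ‖(∑ x : Fin n → F, h x * f1 x) + (∑ x : Fin n → F, h x * f2 x)‖ := by
      have hsum : (∑ x : Fin n → F, h x * f1 x) + (∑ x : Fin n → F, h x * f2 x)
          = ∑ x : Fin n → F, h x * f x := by
        rw [← Finset.sum_add_distrib]
        exact Finset.sum_congr rfl fun x _ => by rw [hsplit x]; ring
      rw [hsum, hpair_f, Complex.norm_real, Real.norm_eq_abs, abs_of_nonneg hR0]
    have hB2 : ‖∑ x : Fin n → F, h x * f2 x‖
        ≤ (C * σ) * (Λ ^ (q'-s) * R) ^ (1/q') := by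
      calc ‖∑ x : Fin n → F, h x * f2 x‖
          ≤ ∑ x : Fin n → F, ‖h x‖ * ‖f2 x‖ := by
            refine le_trans (norm_sum_le _ _) (le_of_eq ?_)
            exact Finset.sum_congr rfl fun x _ => norm_mul _ _
        _ ≤ (∑ x : Fin n → F, ‖h x‖ ^ q) ^ (1/q)
              * (∑ x : Fin n → F, ‖f2 x‖ ^ q') ^ (1/q') :=
            Real.inner_le_Lp_mul_Lq_of_nonneg Finset.univ hconjq (fun i _ => habsnn _)
              (fun i _ => habsnn _)
        _ ≤ (C * σ) * (Λ ^ (q'-s) * R) ^ (1/q') := by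
            refine mul_le_mul hyph ?_
              (Real.rpow_nonneg (Finset.sum_nonneg fun x _ => Real.rpow_nonneg (habsnn _) _) _)
              (mul_nonneg hCpos.le hσ0)
            exact Real.rpow_le_rpow
              (Finset.sum_nonneg fun x _ => Real.rpow_nonneg (habsnn _) _) hE3
              (le_of_lt (one_div_pos.mpr hq'0))
    have hB1 : ‖∑ x : Fin n → F, h x * f1 x‖
        ≤ σ * (T + A ^ ((1:ℝ)/2) * D * (Λ ^ (1-s) * R)) := by
      have hb := B1bound ψ S hSc0 hε0 hK g f1 hconjp hp'2 hT0.le hZ0 hE1 hE2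
      rw [hsqrtε] at hb
      rw [hhdef, hσdef]
      refine le_trans hb (le_of_eq ?_)
      ring
    have hI1 : D * (Λ ^ (1-s) * R) = E * T := by
      have hstep : Λ ^ (1-s) * R = μ ^ (1-s) * T := by
        rw [hΛdef, Real.mul_rpow hμ0.le hT0.le, ← hTs, mul_assoc, ← Real.rpow_add hT0]
        have h1 : 1 - s + s = 1 := by ring
        rw [h1, Real.rpow_one]
      have hμe : μ ^ (1-s) = C ^ θ * D ^ (-θ) := by
        rw [hμdef, ← Real.rpow_mul (div_nonneg hD0.le hCpos.le), he1,
          Real.rpow_neg (div_nonneg hD0.le hCpos.le), Real.div_rpow hD0.le hCpos.le,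
          inv_div, div_eq_mul_inv, ← Real.rpow_neg hD0.le]
      have hDD : D * D ^ (-θ) = D ^ (1-θ) := by
        rw [(show (1:ℝ)-θ = 1 + (-θ) by ring), Real.rpow_add hD0, Real.rpow_one]
      rw [hstep, hμe, hEdef]
      calc D * (C^θ * D^(-θ) * T) = (D * D^(-θ)) * (C^θ * T) := by ring
        _ = D^(1-θ) * (C^θ * T) := by rw [hDD]
        _ = C^θ * D^(1-θ) * T := by ring
    have hI2 : C * (Λ ^ (q'-s) * R) ^ (1/q') = E * T := by
      have hstep : Λ ^ (q'-s) * R = μ ^ (q'-s) * T ^ q' := by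
        rw [hΛdef, Real.mul_rpow hμ0.le hT0.le, ← hTs, mul_assoc, ← Real.rpow_add hT0]
        have h1 : q' - s + s = q' := by ring
        rw [h1]
      have hpow : (μ ^ (q'-s) * T ^ q') ^ (1/q') = μ ^ ((q'-s)/q') * T := by
        rw [Real.mul_rpow (Real.rpow_nonneg hμ0.le _) (Real.rpow_nonneg hT0.le _),
          ← Real.rpow_mul hμ0.le, ← Real.rpow_mul hT0.le, mul_one_div,
          mul_one_div_cancel hq'0.ne', Real.rpow_one]
      have hμe : μ ^ ((q'-s)/q') = D^(1-θ) * C^(θ-1) := by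
        rw [hμdef, ← Real.rpow_mul (div_nonneg hD0.le hCpos.le), he2,
          Real.div_rpow hD0.le hCpos.le, div_eq_mul_inv, ← Real.rpow_neg hCpos.le]
        congr 1
        ring
      have hCC : C * C ^ (θ-1) = C ^ θ := by
        calc C * C ^ (θ-1) = C ^ (1:ℝ) * C ^ (θ-1) := by rw [Real.rpow_one]
          _ = C ^ (1 + (θ-1)) := (Real.rpow_add hCpos _ _).symm
          _ = C ^ θ := by norm_num
      rw [hstep, hpow, hμe, hEdef]
      calc C * (D^(1-θ) * C^(θ-1) * T) = (C * C^(θ-1)) * (D^(1-θ) * T) := by ring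
        _ = C^θ * (D^(1-θ) * T) := by rw [hCC]
        _ = C^θ * D^(1-θ) * T := by ring
    have hfinal : R ≤ σ * ((1 + (A^((1:ℝ)/2) + 1) * E) * T) := by
      have e1 : A^((1:ℝ)/2) * D * (Λ^(1-s)*R) = A^((1:ℝ)/2) * (E*T) := by
        rw [mul_assoc, hI1]
      have e2 : (C*σ) * (Λ^(q'-s)*R)^(1/q') = σ * (E*T) := by
        rw [mul_comm C σ, mul_assoc, hI2]
      calc R = ‖(∑ x : Fin n → F, h x * f1 x) + (∑ x : Fin n → F, h x * f2 x)‖ :=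
            hRabs
        _ ≤ ‖∑ x : Fin n → F, h x * f1 x‖
              + ‖∑ x : Fin n → F, h x * f2 x‖ := norm_add_le _ _
        _ ≤ σ * (T + A^((1:ℝ)/2) * D * (Λ^(1-s)*R)) + (C*σ) * (Λ^(q'-s)*R)^(1/q') :=
            add_le_add hB1 hB2
        _ = σ * (T + A^((1:ℝ)/2) * (E*T)) + σ * (E*T) := by rw [e1, e2]
        _ = σ * ((1 + (A^((1:ℝ)/2) + 1) * E) * T) := by ring
    have hRsplit : R = T * R ^ (1/r) := by
      calc R = R ^ (1:ℝ) := (Real.rpow_one R).symm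
        _ = R ^ (1/s + 1/r) := by rw [hinv_sr]
        _ = T * R^(1/r) := by rw [Real.rpow_add hR, hTdef]
    have hdiv : R ^ (1/r) ≤ σ * (1 + (A^((1:ℝ)/2)+1)*E) := by
      have h2 : T * R^(1/r) ≤ T * (σ * (1 + (A^((1:ℝ)/2)+1)*E)) := by
        calc T * R^(1/r) = R := hRsplit.symm
          _ ≤ σ * ((1 + (A^((1:ℝ)/2)+1)*E) * T) := hfinal
          _ = T * (σ * (1 + (A^((1:ℝ)/2)+1)*E)) := by ring
      exact le_of_mul_le_mul_left h2 hT0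
    have hlast : σ * (1 + (A^((1:ℝ)/2)+1)*E) ≤ (1 + A^((1:ℝ)/2)) * (1+E) * σ := by
      have hx : (1 + (A^((1:ℝ)/2)+1)*E) ≤ (1 + A^((1:ℝ)/2)) * (1+E) := by
        have h1 : (1 + A^((1:ℝ)/2)) * (1+E) = 1 + (A^((1:ℝ)/2)+1)*E + A^((1:ℝ)/2) := by ring
        linarith
      calc σ * (1 + (A^((1:ℝ)/2)+1)*E) ≤ σ * ((1 + A^((1:ℝ)/2)) * (1+E)) :=
            mul_le_mul_of_nonneg_left hx hσ0
        _ = (1 + A^((1:ℝ)/2)) * (1+E) * σ := by ring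
    exact le_trans hdiv hlast
end

section
/- There is an absolute constant C such that for every finite field F of odd characteristic, with S := {(ξ, u, v) ∈ F³ : uv = ξ²} \ {(0,0,0)} the cone in F³ with the origin removed, and every g : S → ℂ, one has ‖(g dσ)ˇ‖_{L^4(F³,dx)} ≤ C ‖g‖_{L^2(S,dσ)}. -/
open scoped BigOperators

/-- The cone `{(ξ, u, v) ∈ F³ : uv = ξ²}` with the origin removed. -/
def cone (F : Type*) [Field F] [Fintype F] [DecidableEq F] : Finset (Fin 3 → F) :=
  Finset.univ.filter (fun x : Fin 3 → F => x 1 * x 2 = (x 0) ^ 2 ∧ x ≠ 0)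

namespace Statement7Aux

variable {F : Type} [Field F] [Fintype F] [DecidableEq F]

lemma card_quad_roots (α β γ : F) (hα : α ≠ 0) :
    (Finset.univ.filter fun x : F => α * x ^ 2 + β * x + γ = 0).card ≤ 2 := by
  classical
  set p : Polynomial F := Polynomial.C α * Polynomial.X ^ 2 + Polynomial.C β * Polynomial.X
      + Polynomial.C γ with hp
  have hdeg : p.natDegree = 2 := Polynomial.natDegree_quadratic hα
  have hp0 : p ≠ 0 := by
    intro h; rw [h] at hdeg; simp at hdeg
  have hsub : (Finset.univ.filter fun x : F => α * x ^ 2 + β * x + γ = 0) ⊆ p.roots.toFinset := by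
    intro x hx
    rw [Finset.mem_filter] at hx
    rw [Multiset.mem_toFinset, Polynomial.mem_roots hp0]
    simp [Polynomial.IsRoot, hp, hx.2]
  calc (Finset.univ.filter fun x : F => α * x ^ 2 + β * x + γ = 0).card
      ≤ p.roots.toFinset.card := Finset.card_le_card hsub
    _ ≤ Multiset.card p.roots := p.roots.toFinset_card_le
    _ ≤ p.natDegree := p.card_roots'
    _ = 2 := hdeg

lemma card_quad_plane (c0 c1 c2 d : F)
    (h : c1 ≠ 0 ∨ c2 ≠ 0 ∨ (c1 = 0 ∧ c2 = 0 ∧ c0 ≠ 0 ∧ d ≠ 0)) :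
    (Finset.univ.filter fun a : Fin 3 → F =>
      a 1 * a 2 = a 0 ^ 2 ∧ c0 * a 0 + c1 * a 1 + c2 * a 2 = d).card
      ≤ 2 * Fintype.card F := by
  classical
  set T := Finset.univ.filter fun a : Fin 3 → F =>
      a 1 * a 2 = a 0 ^ 2 ∧ c0 * a 0 + c1 * a 1 + c2 * a 2 = d with hT
  have hmem : ∀ a, a ∈ T → (a 1 * a 2 = a 0 ^ 2 ∧ c0 * a 0 + c1 * a 1 + c2 * a 2 = d) := by
    intro a ha; rw [hT, Finset.mem_filter] at ha; exact ha.2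
  rcases h with hc1 | hc2 | ⟨hc10, hc20, hc0, hd⟩
  · rw [Finset.card_eq_sum_card_fiberwise (f := fun a => a 2) (t := Finset.univ)
      (fun a _ => Finset.mem_univ _)]
    have hfib : ∀ y : F, (T.filter fun a => a 2 = y).card ≤ 2 := by
      intro y
      refine le_trans (Finset.card_le_card_of_injOn (fun a => a 0) ?_ ?_)
        (card_quad_roots c1 (c0 * y) (c2 * y ^ 2 - d * y) hc1)
      · intro a ha
        rw [Finset.mem_coe, Finset.mem_filter] at ha
        obtain ⟨haT, hay⟩ := ha
        obtain ⟨hQ, hL⟩ := hmem a haT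
        rw [Finset.mem_coe, Finset.mem_filter]
        refine ⟨Finset.mem_univ _, ?_⟩
        subst hay
        linear_combination (-c1) * hQ + (a 2) * hL
      · intro a ha b hb h0
        simp only [Finset.coe_filter, Set.mem_setOf_eq] at ha hb
        obtain ⟨hQa, hLa⟩ := hmem a ha.1
        obtain ⟨hQb, hLb⟩ := hmem b hb.1
        have h2 : a 2 = b 2 := ha.2.trans hb.2.symm
        have e : c1 * a 1 = c1 * b 1 := by
          linear_combination hLa - hLb - c0 * h0 - c2 * h2
        have h1 : a 1 = b 1 := mul_left_cancel₀ hc1 e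
        funext i; fin_cases i <;> assumption
    calc ∑ y : F, (T.filter fun a => a 2 = y).card ≤ ∑ _y : F, 2 :=
          Finset.sum_le_sum fun y _ => hfib y
      _ = 2 * Fintype.card F := by
          simp [Finset.sum_const, Finset.card_univ, mul_comm]
  · rw [Finset.card_eq_sum_card_fiberwise (f := fun a => a 1) (t := Finset.univ)
      (fun a _ => Finset.mem_univ _)]
    have hfib : ∀ y : F, (T.filter fun a => a 1 = y).card ≤ 2 := by
      intro y
      refine le_trans (Finset.card_le_card_of_injOn (fun a => a 0) ?_ ?_)
        (card_quad_roots c2 (c0 * y) (c1 * y ^ 2 - d * y) hc2)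
      · intro a ha
        rw [Finset.mem_coe, Finset.mem_filter] at ha
        obtain ⟨haT, hay⟩ := ha
        obtain ⟨hQ, hL⟩ := hmem a haT
        rw [Finset.mem_coe, Finset.mem_filter]
        refine ⟨Finset.mem_univ _, ?_⟩
        subst hay
        linear_combination (-c2) * hQ + (a 1) * hL
      · intro a ha b hb h0
        simp only [Finset.coe_filter, Set.mem_setOf_eq] at ha hb
        obtain ⟨hQa, hLa⟩ := hmem a ha.1
        obtain ⟨hQb, hLb⟩ := hmem b hb.1
        have h1 : a 1 = b 1 := ha.2.trans hb.2.symm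
        have e : c2 * a 2 = c2 * b 2 := by
          linear_combination hLa - hLb - c0 * h0 - c1 * h1
        have h2 : a 2 = b 2 := mul_left_cancel₀ hc2 e
        funext i; fin_cases i <;> assumption
    calc ∑ y : F, (T.filter fun a => a 1 = y).card ≤ ∑ _y : F, 2 :=
          Finset.sum_le_sum fun y _ => hfib y
      _ = 2 * Fintype.card F := by
          simp [Finset.sum_const, Finset.card_univ, mul_comm]
  · subst hc10; subst hc20
    have hle : T.card ≤ Fintype.card F := by
      rw [← Finset.card_univ (α := F)]
      apply Finset.card_le_card_of_injOn (fun a => a 1) (fun a _ => Finset.mem_univ _)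
      intro a ha b hb h1
      simp only [Finset.mem_coe] at ha hb
      obtain ⟨hQa, hLa⟩ := hmem a ha
      obtain ⟨hQb, hLb⟩ := hmem b hb
      have hLa0 : c0 * a 0 = d := by linear_combination hLa
      have hLb0 : c0 * b 0 = d := by linear_combination hLb
      have h0 : a 0 = b 0 := mul_left_cancel₀ hc0 (hLa0.trans hLb0.symm)
      have ha0 : a 0 ≠ 0 := by
        intro hz; rw [hz, mul_zero] at hLa0; exact hd hLa0.symm
      have ha1 : a 1 ≠ 0 := by
        intro hz
        rw [hz, zero_mul] at hQa
        exact ha0 (pow_eq_zero_iff (n := 2) (by norm_num) |>.mp hQa.symm)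
      have h1' : a 1 = b 1 := h1
      have e : a 1 * a 2 = a 1 * b 2 := by
        linear_combination hQa - hQb + (a 0 + b 0) * h0 - (b 2) * h1'
      have h2 : a 2 = b 2 := mul_left_cancel₀ ha1 e
      funext i; fin_cases i <;> assumption
    omega

lemma mem_cone {a : Fin 3 → F} : a ∈ cone F ↔ a 1 * a 2 = a 0 ^ 2 ∧ a ≠ 0 := by
  simp [cone]

lemma neg_mem_cone {a : Fin 3 → F} (ha : a ∈ cone F) : -a ∈ cone F := by
  rw [mem_cone] at ha ⊢
  refine ⟨?_, neg_ne_zero.mpr ha.2⟩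
  simp only [Pi.neg_apply]
  linear_combination ha.1

lemma card_slice (h2 : (2:F) ≠ 0) (w : Fin 3 → F) (hw : w ≠ 0) :
    (Finset.univ.filter fun a : Fin 3 → F =>
      a 1 * a 2 = a 0 ^ 2 ∧ (w 1 - a 1) * (w 2 - a 2) = (w 0 - a 0) ^ 2).card
      ≤ 2 * Fintype.card F := by
  classical
  have hsub : (Finset.univ.filter fun a : Fin 3 → F =>
      a 1 * a 2 = a 0 ^ 2 ∧ (w 1 - a 1) * (w 2 - a 2) = (w 0 - a 0) ^ 2)
      ⊆ (Finset.univ.filter fun a : Fin 3 → F =>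
      a 1 * a 2 = a 0 ^ 2 ∧ (-(2 * w 0)) * a 0 + (w 2) * a 1 + (w 1) * a 2
        = w 1 * w 2 - w 0 ^ 2) := by
    intro a ha
    rw [Finset.mem_filter] at ha ⊢
    obtain ⟨_, hQ, hC⟩ := ha
    exact ⟨Finset.mem_univ _, hQ, by linear_combination hQ - hC⟩
  refine le_trans (Finset.card_le_card hsub) ?_
  apply card_quad_plane
  by_cases hw2 : w 2 ≠ 0
  · exact Or.inl hw2
  · push_neg at hw2
    by_cases hw1 : w 1 ≠ 0
    · exact Or.inr (Or.inl hw1)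
    · push_neg at hw1
      have hw0 : w 0 ≠ 0 := by
        intro h0
        exact hw (by funext i; fin_cases i <;> assumption)
      refine Or.inr (Or.inr ⟨hw2, hw1, neg_ne_zero.mpr (mul_ne_zero h2 hw0), ?_⟩)
      rw [hw1]
      simpa using pow_ne_zero 2 hw0

lemma card_pairs (h2 : (2:F) ≠ 0) (w : Fin 3 → F) (hw : w ≠ 0) :
    (((cone F) ×ˢ (cone F)).filter fun p => p.1 + p.2 = w).card ≤ 2 * Fintype.card F := by
  classical
  refine le_trans (Finset.card_le_card_of_injOn (fun p => p.1) ?_ ?_) (card_slice h2 w hw)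
  · rintro ⟨a, b⟩ hp
    rw [Finset.mem_coe, Finset.mem_filter, Finset.mem_product] at hp
    obtain ⟨⟨haS, hbS⟩, hsum⟩ := hp
    rw [mem_cone] at haS hbS
    rw [Finset.mem_coe, Finset.mem_filter]
    refine ⟨Finset.mem_univ _, haS.1, ?_⟩
    have hb : ∀ i, b i = w i - a i := by
      intro i
      have := congr_fun hsum i
      simp only [Pi.add_apply] at this
      exact eq_sub_of_add_eq' this
    show (w 1 - a 1) * (w 2 - a 2) = (w 0 - a 0) ^ 2
    have h1 := hbS.1
    simp only at h1
    rw [hb 1, hb 2, hb 0] at h1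
    exact h1
  · rintro ⟨a, b⟩ ha ⟨a', b'⟩ hb hfst
    simp only [Finset.mem_coe, Finset.mem_filter] at ha hb
    have hfst' : a = a' := hfst
    have hsnd : b = b' := by
      have h1 : a + b = w := ha.2
      have h2' : a' + b' = w := hb.2
      rw [← hfst'] at h2'
      exact add_left_cancel (h1.trans h2'.symm)
    exact Prod.ext hfst' hsnd

lemma card_cone_lower : (Fintype.card F - 1) * Fintype.card F ≤ (cone F).card := by
  classical
  have key : ((Finset.univ.erase (0:F)) ×ˢ (Finset.univ : Finset F)).card ≤ (cone F).card := by
    apply Finset.card_le_card_of_injOn (fun p => ![p.1 * p.2, p.1, p.1 * p.2 ^ 2])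
    · rintro ⟨s, t⟩ hp
      rw [Finset.mem_coe, Finset.mem_product, Finset.mem_erase] at hp
      have hs : s ≠ 0 := hp.1.1
      rw [Finset.mem_coe, mem_cone]
      constructor
      · show s * (s * t ^ 2) = (s * t) ^ 2
        ring
      · intro h
        have := congr_fun h 1
        simp only [Pi.zero_apply] at this
        exact hs this
    · rintro ⟨s, t⟩ hp ⟨s', t'⟩ hp' heq
      rw [Finset.coe_product] at hp hp'
      have hs : s ≠ 0 := by
        have := hp.1
        simp only [Finset.coe_erase, Set.mem_diff, Set.mem_singleton_iff] at this
        exact this.2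
      have h1 : s = s' := congr_fun heq 1
      have h0 : s * t = s' * t' := congr_fun heq 0
      rw [← h1] at h0
      have ht : t = t' := mul_left_cancel₀ hs h0
      simp [h1, ht]
  calc (Fintype.card F - 1) * Fintype.card F
      = ((Finset.univ.erase (0:F)) ×ˢ (Finset.univ : Finset F)).card := by
        rw [Finset.card_product, Finset.card_erase_of_mem (Finset.mem_univ _), Finset.card_univ]
    _ ≤ (cone F).card := key

lemma sum_psi_single (ψ : AddChar F ℂ) (hψ : ψ ≠ 1) (u : F) :
    ∑ t : F, ψ (t * u) = if u = 0 then (Fintype.card F : ℂ) else 0 := by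
  split_ifs with h
  · simp [h, Finset.card_univ]
  · have hprim : ψ.IsPrimitive := AddChar.IsPrimitive.of_ne_one hψ
    have h1 : AddChar.mulShift ψ u ≠ 1 := hprim h
    have h0 : AddChar.mulShift ψ u ≠ 0 := by
      rwa [← AddChar.one_eq_zero]
    have hz := AddChar.sum_eq_zero_iff_ne_zero.mpr h0
    calc ∑ t : F, ψ (t * u) = ∑ t : F, AddChar.mulShift ψ u t := by
          refine Finset.sum_congr rfl fun t _ => ?_
          rw [AddChar.mulShift_apply, mul_comm]
      _ = 0 := hz

lemma ortho (ψ : AddChar F ℂ) (hψ : ψ ≠ 1) (u : Fin 3 → F) :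
    ∑ x : Fin 3 → F, ψ (∑ i, x i * u i)
      = if u = 0 then ((Fintype.card F : ℂ)) ^ 3 else 0 := by
  have h1 : ∀ x : Fin 3 → F, ψ (∑ i, x i * u i) = ∏ i, ψ (x i * u i) := by
    intro x
    rw [Fin.sum_univ_three, Fin.prod_univ_three, AddChar.map_add_eq_mul, AddChar.map_add_eq_mul]
  simp_rw [h1]
  have h2 : ∑ x : Fin 3 → F, ∏ i, ψ (x i * u i) = ∏ i, ∑ t : F, ψ (t * u i) := by
    rw [Finset.prod_univ_sum]
    rw [← Fintype.piFinset_univ]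
  rw [h2]
  simp_rw [sum_psi_single ψ hψ]
  by_cases hu : u = 0
  · simp [hu, Finset.card_univ]
  · rw [if_neg hu]
    obtain ⟨i, hi⟩ : ∃ i, u i ≠ 0 := by
      by_contra hc
      push_neg at hc
      exact hu (funext hc)
    exact Finset.prod_eq_zero (Finset.mem_univ i) (by simp [hi])

lemma parseval (ψ : AddChar F ℂ) (hψ : ψ ≠ 1) (hch : 0 < ringChar F)
    (S : Finset (Fin 3 → F)) (g : (Fin 3 → F) → ℂ) :
    ∑ x : Fin 3 → F, ‖∑ ξ ∈ S, g ξ * ψ (∑ i, x i * ξ i)‖ ^ 4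
      = (Fintype.card F : ℝ) ^ 3 * ∑ w : Fin 3 → F,
          ‖∑ p ∈ (S ×ˢ S).filter (fun p => p.1 + p.2 = w), g p.1 * g p.2‖ ^ 2 := by
  classical
  set q := Fintype.card F with hq
  set h : (Fin 3 → F) → ℂ := fun x => ∑ ξ ∈ S, g ξ * ψ (∑ i, x i * ξ i) with hh
  set G : (Fin 3 → F) → ℂ :=
    fun w => ∑ p ∈ (S ×ˢ S).filter (fun p => p.1 + p.2 = w), g p.1 * g p.2 with hG
  have hdot : ∀ x a b : Fin 3 → F,
      ψ (∑ i, x i * a i) * ψ (∑ i, x i * b i) = ψ (∑ i, x i * (a + b) i) := by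
    intro x a b
    rw [← AddChar.map_add_eq_mul]
    congr 1
    rw [← Finset.sum_add_distrib]
    exact Finset.sum_congr rfl fun i _ => by simp [mul_add]
  have hsq : ∀ x, h x ^ 2 = ∑ w : Fin 3 → F, G w * ψ (∑ i, x i * w i) := by
    intro x
    have step : ∀ w, G w * ψ (∑ i, x i * w i)
        = ∑ p ∈ (S ×ˢ S).filter (fun p => p.1 + p.2 = w),
            (g p.1 * ψ (∑ i, x i * p.1 i)) * (g p.2 * ψ (∑ i, x i * p.2 i)) := by
      intro w
      rw [hG]
      simp only
      rw [Finset.sum_mul]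
      refine Finset.sum_congr rfl fun p hp => ?_
      have hpw : p.1 + p.2 = w := (Finset.mem_filter.mp hp).2
      rw [← hpw, ← hdot]
      ring
    simp_rw [step]
    rw [Finset.sum_fiberwise_of_maps_to (fun p _ => Finset.mem_univ (p.1 + p.2))]
    rw [Finset.sum_product, sq, Finset.sum_mul_sum]
  have hconj : ∀ y : F, (starRingEnd ℂ) (ψ y) = ψ (-y) := by
    intro y
    rw [AddChar.starComp_apply hch, AddChar.inv_apply]
  have key : ∑ x : Fin 3 → F, (h x ^ 2 * (starRingEnd ℂ) (h x ^ 2))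
      = (q : ℂ) ^ 3 * ∑ w : Fin 3 → F, G w * (starRingEnd ℂ) (G w) := by
    have hdiff : ∀ x w w' : Fin 3 → F,
        ψ (∑ i, x i * w i) * ψ (-(∑ i, x i * w' i)) = ψ (∑ i, x i * (w - w') i) := by
      intro x w w'
      rw [← AddChar.map_add_eq_mul]
      congr 1
      rw [← sub_eq_add_neg, ← Finset.sum_sub_distrib]
      exact Finset.sum_congr rfl fun i _ => by simp [mul_sub]
    have expand : ∀ x : Fin 3 → F, h x ^ 2 * (starRingEnd ℂ) (h x ^ 2)
        = ∑ w : Fin 3 → F, ∑ w' : Fin 3 → F,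
            (G w * (starRingEnd ℂ) (G w')) * ψ (∑ i, x i * (w - w') i) := by
      intro x
      rw [hsq x, map_sum, Finset.sum_mul_sum]
      refine Finset.sum_congr rfl fun w _ => Finset.sum_congr rfl fun w' _ => ?_
      rw [map_mul, hconj, ← hdiff x w w']
      ring
    calc ∑ x : Fin 3 → F, (h x ^ 2 * (starRingEnd ℂ) (h x ^ 2))
        = ∑ x : Fin 3 → F, ∑ w : Fin 3 → F, ∑ w' : Fin 3 → F,
            (G w * (starRingEnd ℂ) (G w')) * ψ (∑ i, x i * (w - w') i) :=
          Finset.sum_congr rfl fun x _ => expand x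
      _ = ∑ w : Fin 3 → F, ∑ w' : Fin 3 → F,
            (G w * (starRingEnd ℂ) (G w')) * ∑ x : Fin 3 → F, ψ (∑ i, x i * (w - w') i) := by
          rw [Finset.sum_comm]
          refine Finset.sum_congr rfl fun w _ => ?_
          rw [Finset.sum_comm]
          exact Finset.sum_congr rfl fun w' _ => (Finset.mul_sum _ _ _).symm
      _ = ∑ w : Fin 3 → F, G w * (starRingEnd ℂ) (G w) * (q : ℂ) ^ 3 := by
          refine Finset.sum_congr rfl fun w _ => ?_
          simp_rw [ortho ψ hψ, sub_eq_zero, mul_ite, mul_zero]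
          rw [Finset.sum_ite_eq]
          simp [hq]
      _ = (q : ℂ) ^ 3 * ∑ w : Fin 3 → F, G w * (starRingEnd ℂ) (G w) := by
          rw [← Finset.sum_mul]
          exact mul_comm _ _
  have cast4 : ∀ z : ℂ, ((‖z‖ : ℂ)) ^ 4 = z ^ 2 * (starRingEnd ℂ) (z ^ 2) := by
    intro z
    rw [Complex.mul_conj]
    have : Complex.normSq (z ^ 2) = ‖z‖ ^ 4 := by
      rw [Complex.normSq_eq_norm_sq, norm_pow, ← pow_mul]
    rw [this]
    push_cast
    ring
  have cast2 : ∀ z : ℂ, ((‖z‖ : ℂ)) ^ 2 = z * (starRingEnd ℂ) z := by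
    intro z
    rw [Complex.mul_conj]
    rw [Complex.normSq_eq_norm_sq]
    push_cast
    ring
  have main : ((∑ x : Fin 3 → F, ‖h x‖ ^ 4 : ℝ) : ℂ)
      = (((q : ℝ) ^ 3 * ∑ w : Fin 3 → F, ‖G w‖ ^ 2 : ℝ) : ℂ) := by
    push_cast
    calc (∑ x : Fin 3 → F, (‖h x‖ : ℂ) ^ 4)
        = ∑ x : Fin 3 → F, (h x ^ 2 * (starRingEnd ℂ) (h x ^ 2)) :=
          Finset.sum_congr rfl fun x _ => cast4 (h x)
      _ = (q : ℂ) ^ 3 * ∑ w : Fin 3 → F, G w * (starRingEnd ℂ) (G w) := key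
      _ = (q : ℂ) ^ 3 * ∑ w : Fin 3 → F, (‖G w‖ : ℂ) ^ 2 := by
          rw [Finset.sum_congr rfl fun w _ => (cast2 (G w)).symm]
  exact_mod_cast main

lemma energy_bound (h2 : (2:F) ≠ 0) (g : (Fin 3 → F) → ℂ) :
    ∑ w : Fin 3 → F, ‖∑ p ∈ ((cone F) ×ˢ (cone F)).filter
        (fun p => p.1 + p.2 = w), g p.1 * g p.2‖ ^ 2
      ≤ (2 * (Fintype.card F : ℝ) + 1) * (∑ ξ ∈ cone F, ‖g ξ‖ ^ 2) ^ 2 := by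
  classical
  set S := cone F with hS
  set G : (Fin 3 → F) → ℂ :=
    fun w => ∑ p ∈ (S ×ˢ S).filter (fun p => p.1 + p.2 = w), g p.1 * g p.2 with hG
  set G₂ : ℝ := ∑ ξ ∈ S, ‖g ξ‖ ^ 2 with hG2
  have hG2nn : 0 ≤ G₂ := Finset.sum_nonneg fun ξ _ => by positivity
  have habsle : ∀ w, ‖G w‖ ≤ ∑ p ∈ (S ×ˢ S).filter (fun p => p.1 + p.2 = w),
      ‖g p.1‖ * ‖g p.2‖ := by
    intro w
    refine le_trans (norm_sum_le _ _) (le_of_eq ?_)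
    exact Finset.sum_congr rfl fun p _ => norm_mul _ _
  have diag : ‖G 0‖ ^ 2 ≤ G₂ ^ 2 := by
    have h1 : ∑ p ∈ (S ×ˢ S).filter (fun p => p.1 + p.2 = 0),
        ‖g p.1‖ * ‖g p.2‖
        ≤ ∑ a ∈ S, ‖g a‖ * ‖g (-a)‖ := by
      have himg : ∑ p ∈ (S ×ˢ S).filter (fun p => p.1 + p.2 = 0),
          ‖g p.1‖ * ‖g p.2‖
          = ∑ a ∈ ((S ×ˢ S).filter (fun p => p.1 + p.2 = 0)).image Prod.fst,
              ‖g a‖ * ‖g (-a)‖ := by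
        rw [Finset.sum_image ?inj]
        case inj =>
          rintro ⟨a, b⟩ hp ⟨a', b'⟩ hp' he
          rw [Finset.mem_coe, Finset.mem_filter] at hp hp'
          have hb : b = -a := eq_neg_of_add_eq_zero_right hp.2
          have hb' : b' = -a' := eq_neg_of_add_eq_zero_right hp'.2
          have ha : a = a' := he
          subst ha; subst hb; subst hb'; rfl
        refine Finset.sum_congr rfl fun p hp => ?_
        rw [Finset.mem_filter] at hp
        have hb : p.2 = -p.1 := eq_neg_of_add_eq_zero_right hp.2
        rw [hb]
      rw [himg]
      apply Finset.sum_le_sum_of_subset_of_nonneg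
      · intro a ha
        rw [Finset.mem_image] at ha
        obtain ⟨p, hp, hpa⟩ := ha
        rw [Finset.mem_filter, Finset.mem_product] at hp
        rw [← hpa]
        exact hp.1.1
      · intro a _ _
        positivity
    have h2' : (∑ a ∈ S, ‖g a‖ * ‖g (-a)‖) ^ 2 ≤ G₂ * G₂ := by
      refine le_trans (Finset.sum_mul_sq_le_sq_mul_sq S _ _) (le_of_eq ?_)
      have hneg : ∑ i ∈ S, ‖g (-i)‖ ^ 2 = ∑ ξ ∈ S, ‖g ξ‖ ^ 2 := by
        refine Finset.sum_nbij' (fun a => -a) (fun a => -a) ?_ ?_ ?_ ?_ ?_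
        · intro a ha; exact neg_mem_cone ha
        · intro a ha; exact neg_mem_cone ha
        · intro a _; simp
        · intro a _; simp
        · intro a _; simp
      rw [hneg, ← hG2]
    calc ‖G 0‖ ^ 2
        ≤ (∑ p ∈ (S ×ˢ S).filter (fun p => p.1 + p.2 = 0),
            ‖g p.1‖ * ‖g p.2‖) ^ 2 := by
          apply pow_le_pow_left₀ (norm_nonneg _) (habsle 0)
      _ ≤ (∑ a ∈ S, ‖g a‖ * ‖g (-a)‖) ^ 2 := by
          apply pow_le_pow_left₀ (Finset.sum_nonneg fun p _ => by positivity) h1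
      _ ≤ G₂ * G₂ := h2'
      _ = G₂ ^ 2 := (sq G₂).symm
  have offdiag : ∀ w : Fin 3 → F, w ≠ 0 → ‖G w‖ ^ 2
      ≤ (2 * (Fintype.card F : ℝ)) * ∑ p ∈ (S ×ˢ S).filter (fun p => p.1 + p.2 = w),
          ‖g p.1‖ ^ 2 * ‖g p.2‖ ^ 2 := by
    intro w hw
    have cs : (∑ p ∈ (S ×ˢ S).filter (fun p => p.1 + p.2 = w),
        ‖g p.1‖ * ‖g p.2‖) ^ 2
        ≤ (((S ×ˢ S).filter (fun p => p.1 + p.2 = w)).card : ℝ)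
          * ∑ p ∈ (S ×ˢ S).filter (fun p => p.1 + p.2 = w),
              ‖g p.1‖ ^ 2 * ‖g p.2‖ ^ 2 := by
      have := Finset.sum_mul_sq_le_sq_mul_sq ((S ×ˢ S).filter (fun p => p.1 + p.2 = w))
        (fun _ => (1:ℝ)) (fun p => ‖g p.1‖ * ‖g p.2‖)
      simp only [one_mul, one_pow] at this
      refine le_trans this (le_of_eq ?_)
      congr 1
      · simp
      · exact Finset.sum_congr rfl fun p _ => (mul_pow _ _ _)
    have hcard : (((S ×ˢ S).filter (fun p => p.1 + p.2 = w)).card : ℝ)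
        ≤ 2 * (Fintype.card F : ℝ) := by
      have := card_pairs h2 w hw
      exact_mod_cast this
    calc ‖G w‖ ^ 2
        ≤ (∑ p ∈ (S ×ˢ S).filter (fun p => p.1 + p.2 = w),
            ‖g p.1‖ * ‖g p.2‖) ^ 2 :=
          pow_le_pow_left₀ (norm_nonneg _) (habsle w) 2
      _ ≤ (((S ×ˢ S).filter (fun p => p.1 + p.2 = w)).card : ℝ)
          * ∑ p ∈ (S ×ˢ S).filter (fun p => p.1 + p.2 = w),
              ‖g p.1‖ ^ 2 * ‖g p.2‖ ^ 2 := cs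
      _ ≤ (2 * (Fintype.card F : ℝ)) * ∑ p ∈ (S ×ˢ S).filter (fun p => p.1 + p.2 = w),
              ‖g p.1‖ ^ 2 * ‖g p.2‖ ^ 2 := by
          apply mul_le_mul_of_nonneg_right hcard
          apply Finset.sum_nonneg; intro p _; positivity
  have split : ∑ w : Fin 3 → F, ‖G w‖ ^ 2
      = ‖G 0‖ ^ 2 + ∑ w ∈ Finset.univ.erase 0, ‖G w‖ ^ 2 :=
    (Finset.add_sum_erase _ _ (Finset.mem_univ 0)).symm
  have fiber : ∑ w : Fin 3 → F, ∑ p ∈ (S ×ˢ S).filter (fun p => p.1 + p.2 = w),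
      ‖g p.1‖ ^ 2 * ‖g p.2‖ ^ 2 = G₂ ^ 2 := by
    rw [Finset.sum_fiberwise_of_maps_to (fun p _ => Finset.mem_univ (p.1 + p.2))]
    rw [Finset.sum_product, hG2, sq, Finset.sum_mul_sum]
  have rest : ∑ w ∈ Finset.univ.erase 0, ‖G w‖ ^ 2
      ≤ (2 * (Fintype.card F : ℝ)) * G₂ ^ 2 := by
    calc ∑ w ∈ Finset.univ.erase 0, ‖G w‖ ^ 2
        ≤ ∑ w ∈ Finset.univ.erase 0, (2 * (Fintype.card F : ℝ))
            * ∑ p ∈ (S ×ˢ S).filter (fun p => p.1 + p.2 = w),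
              ‖g p.1‖ ^ 2 * ‖g p.2‖ ^ 2 := by
          refine Finset.sum_le_sum fun w hw => ?_
          exact offdiag w (Finset.mem_erase.mp hw).1
      _ = (2 * (Fintype.card F : ℝ)) * ∑ w ∈ Finset.univ.erase 0,
            ∑ p ∈ (S ×ˢ S).filter (fun p => p.1 + p.2 = w),
              ‖g p.1‖ ^ 2 * ‖g p.2‖ ^ 2 :=
          (Finset.mul_sum _ _ _).symm
      _ ≤ (2 * (Fintype.card F : ℝ)) * ∑ w : Fin 3 → F,
            ∑ p ∈ (S ×ˢ S).filter (fun p => p.1 + p.2 = w),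
              ‖g p.1‖ ^ 2 * ‖g p.2‖ ^ 2 := by
          apply mul_le_mul_of_nonneg_left _ (by positivity)
          apply Finset.sum_le_sum_of_subset_of_nonneg (Finset.erase_subset _ _)
          intro w _ _
          apply Finset.sum_nonneg; intro p _; positivity
      _ = (2 * (Fintype.card F : ℝ)) * G₂ ^ 2 := by rw [fiber]
  calc ∑ w : Fin 3 → F, ‖G w‖ ^ 2
      = ‖G 0‖ ^ 2 + ∑ w ∈ Finset.univ.erase 0, ‖G w‖ ^ 2 := split
    _ ≤ G₂ ^ 2 + (2 * (Fintype.card F : ℝ)) * G₂ ^ 2 := add_le_add diag rest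
    _ = (2 * (Fintype.card F : ℝ) + 1) * G₂ ^ 2 := by ring

end Statement7Aux

theorem statement7 :
    ∃ C : ℝ, ∀ (F : Type) [Field F] [Fintype F] [DecidableEq F],
      ringChar F ≠ 2 →
      ∀ (ψ : AddChar F ℂ), (∃ a, ψ a ≠ 1) →
      ∀ g : (Fin 3 → F) → ℂ,
        ambNorm 4 (extOp ψ (cone F) g) ≤ C * surfNorm 2 (cone F) g := by
  classical
  refine ⟨2, ?_⟩
  intro F _ _ _ hchar ψ hψex g
  open Statement7Aux in
  -- basic facts
  have hψ1 : ψ ≠ 1 := AddChar.ne_one_iff.mpr hψex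
  have h2F : (2 : F) ≠ 0 := Ring.two_ne_zero hchar
  have hchpos : 0 < ringChar F :=
    Nat.pos_of_ne_zero (CharP.ringChar_ne_zero_of_finite F)
  set q := Fintype.card F with hqdef
  have hq3 : 3 ≤ q := by
    obtain ⟨n, hp, hcard⟩ := FiniteField.card F (ringChar F)
    have hp3 : 3 ≤ ringChar F := by
      have := hp.two_le
      omega
    calc 3 ≤ ringChar F := hp3
      _ = ringChar F ^ 1 := (pow_one _).symm
      _ ≤ ringChar F ^ (n : ℕ) := Nat.pow_le_pow_right (by omega) n.2
      _ = q := hcard.symm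
  set n := (cone F).card with hndef
  have hnlow : (q - 1) * q ≤ n := card_cone_lower
  have hnpos : 0 < n := by
    have : 0 < (q - 1) * q := by
      have : 2 ≤ q - 1 := by omega
      nlinarith
    omega
  have hnR : (0 : ℝ) < (n : ℝ) := by exact_mod_cast hnpos
  set h : (Fin 3 → F) → ℂ := fun x => ∑ ξ ∈ cone F, g ξ * ψ (∑ i, x i * ξ i) with hh
  set A : ℝ := ∑ x : Fin 3 → F, ‖h x‖ ^ 4 with hA
  set G₂ : ℝ := ∑ ξ ∈ cone F, ‖g ξ‖ ^ 2 with hG2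
  have hG2nn : 0 ≤ G₂ := Finset.sum_nonneg fun ξ _ => by positivity
  set B : ℝ := (n : ℝ)⁻¹ * G₂ with hB
  have hBnn : 0 ≤ B := by positivity
  -- key analytic bound
  have hparseval : A = (q : ℝ) ^ 3 * ∑ w : Fin 3 → F,
      ‖∑ p ∈ ((cone F) ×ˢ (cone F)).filter (fun p => p.1 + p.2 = w),
        g p.1 * g p.2‖ ^ 2 :=
    parseval ψ hψ1 hchpos (cone F) g
  have henergy := energy_bound h2F g
  have hAbound : A ≤ (q : ℝ) ^ 3 * ((2 * (q : ℝ) + 1) * G₂ ^ 2) := by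
    rw [hparseval]
    apply mul_le_mul_of_nonneg_left _ (by positivity)
    exact henergy
  -- numeric bound
  have hnum : (q : ℝ) ^ 3 * (2 * (q : ℝ) + 1) ≤ 16 * (n : ℝ) ^ 2 := by
    have hnat : q ^ 3 * (2 * q + 1) ≤ 16 * n ^ 2 := by
      obtain ⟨k, hk⟩ : ∃ k, q = k + 1 := ⟨q - 1, by omega⟩
      have hk2 : 2 ≤ k := by omega
      have hsq : (k * (k + 1)) * (k * (k + 1)) ≤ n * n := by
        have h1 : k * (k + 1) ≤ n := by
          have hq1 : q - 1 = k := by omega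
          rw [hq1, hk] at hnlow
          exact hnlow
        exact Nat.mul_le_mul h1 h1
      rw [hk]
      nlinarith [hsq, hk2]
    exact_mod_cast hnat
  have hmain : (n : ℝ)⁻¹ ^ 4 * A ≤ 16 * B ^ 2 := by
    have step1 : (n : ℝ)⁻¹ ^ 4 * A
        ≤ (n : ℝ)⁻¹ ^ 4 * ((q : ℝ) ^ 3 * ((2 * (q : ℝ) + 1) * G₂ ^ 2)) :=
      mul_le_mul_of_nonneg_left hAbound (by positivity)
    have step2 : (n : ℝ)⁻¹ ^ 4 * ((q : ℝ) ^ 3 * ((2 * (q : ℝ) + 1) * G₂ ^ 2))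
        ≤ (n : ℝ)⁻¹ ^ 4 * ((16 * (n : ℝ) ^ 2) * G₂ ^ 2) := by
      apply mul_le_mul_of_nonneg_left _ (by positivity)
      have := mul_le_mul_of_nonneg_right hnum (sq_nonneg G₂)
      calc (q : ℝ) ^ 3 * ((2 * (q : ℝ) + 1) * G₂ ^ 2)
          = ((q : ℝ) ^ 3 * (2 * (q : ℝ) + 1)) * G₂ ^ 2 := by ring
        _ ≤ (16 * (n : ℝ) ^ 2) * G₂ ^ 2 := this
    have step3 : (n : ℝ)⁻¹ ^ 4 * ((16 * (n : ℝ) ^ 2) * G₂ ^ 2) = 16 * B ^ 2 := by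
      rw [hB]
      field_simp
    calc (n : ℝ)⁻¹ ^ 4 * A ≤ _ := step1
      _ ≤ _ := step2
      _ = 16 * B ^ 2 := step3
  -- rewrite the norms
  have hambeq : ambNorm 4 (extOp ψ (cone F) g) = ((n : ℝ)⁻¹ ^ 4 * A) ^ ((1:ℝ)/4) := by
    rw [ambNorm]
    congr 1
    rw [hA, Finset.mul_sum]
    refine Finset.sum_congr rfl fun x _ => ?_
    have hext : ‖extOp ψ (cone F) g x‖ = (n : ℝ)⁻¹ * ‖h x‖ := by
      rw [extOp, norm_mul, norm_inv, Complex.norm_natCast, hh]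
    rw [hext]
    rw [show (4:ℝ) = ((4:ℕ):ℝ) by norm_num, Real.rpow_natCast]
    rw [mul_pow]
  have hsurfeq : surfNorm 2 (cone F) g = B ^ ((1:ℝ)/2) := by
    rw [surfNorm, hB, hG2]
    congr 2
    refine Finset.sum_congr rfl fun ξ _ => ?_
    rw [show (2:ℝ) = ((2:ℕ):ℝ) by norm_num, Real.rpow_natCast]
  -- finish
  rw [hambeq, hsurfeq]
  have hApos : 0 ≤ (n : ℝ)⁻¹ ^ 4 * A := by
    apply mul_nonneg (by positivity)
    rw [hA]
    exact Finset.sum_nonneg fun x _ => by positivity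
  calc ((n : ℝ)⁻¹ ^ 4 * A) ^ ((1:ℝ)/4)
      ≤ (16 * B ^ 2) ^ ((1:ℝ)/4) :=
        Real.rpow_le_rpow hApos hmain (by norm_num)
    _ = 2 * B ^ ((1:ℝ)/2) := by
        rw [show (16:ℝ) = (2:ℝ) ^ (4:ℕ) by norm_num]
        rw [Real.mul_rpow (by positivity) (sq_nonneg B)]
        congr 1
        · rw [← Real.rpow_natCast (2:ℝ) 4, ← Real.rpow_mul (by norm_num)]
          norm_num
        · rw [← Real.rpow_natCast B 2, ← Real.rpow_mul hBnn]
          norm_num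
end

section
/- There is an absolute constant c > 0 such that the following holds. Let F be a finite field of odd characteristic and let S := {(ξ, u, v) ∈ F³ : uv = ξ²} \ {(0,0,0)} be the cone in F³ with the origin removed. For all exponents a ∈ [1,∞] and b ∈ [1,∞], if C ≥ 0 is a constant such that ‖f̂‖_{L^a(S,dσ)} ≤ C ‖f‖_{L^b(F³,dx)} for all f : F³ → ℂ, where f̂(ξ) := Σ_{x∈F³} f(x) ψ(−x·ξ), then C ≥ c |F|^{3/2 − 2/b}. In particular, when b > 4/3 (equivalently, for restriction exponents q = b′ < 4) no bound on C uniform in F is possible. -/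
open scoped BigOperators ENNReal

/-- `‖f‖_{L^q(F^m, dx)}` with counting measure, with exponent in `[1,∞]`
(the supremum norm when `q = ∞`). -/
noncomputable def ambNormE {F : Type*} [Fintype F] {m : ℕ} (q : ℝ≥0∞)
    (f : (Fin m → F) → ℂ) : ℝ :=
  if q = ⊤ then ⨆ x : Fin m → F, ‖f x‖
  else (∑ x : Fin m → F, ‖f x‖ ^ q.toReal) ^ (1 / q.toReal)

/-- `‖g‖_{L^p(S, dσ)}` with normalized counting measure on `S`, with exponent in `[1,∞]`
(the supremum norm when `p = ∞`). -/
noncomputable def surfNormE {F : Type*} [Fintype F] {m : ℕ} (p : ℝ≥0∞)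
    (S : Finset (Fin m → F)) (g : (Fin m → F) → ℂ) : ℝ :=
  if p = ⊤ then ⨆ ξ ∈ S, ‖g ξ‖
  else ((S.card : ℝ)⁻¹ * ∑ ξ ∈ S, ‖g ξ‖ ^ p.toReal) ^ (1 / p.toReal)

/-- The Fourier transform `f̂(ξ) = ∑_x f(x) ψ(−x·ξ)`. -/
noncomputable def fourierT {F : Type*} [Field F] [Fintype F] {m : ℕ}
    (ψ : AddChar F ℂ) (f : (Fin m → F) → ℂ) (ξ : Fin m → F) : ℂ :=
  ∑ x : Fin m → F, f x * ψ (-(∑ i, x i * ξ i))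

namespace S9
open Finset
variable {F : Type} [Field F] [Fintype F] [DecidableEq F]

noncomputable def χc : F → ℂ := fun t => ((quadraticChar F t : ℤ) : ℂ)

lemma χc_zero : χc (0:F) = 0 := by simp [χc]

lemma χc_mul (s t : F) : χc (s*t) = χc s * χc t := by
  simp only [χc, map_mul]; push_cast; ring

lemma χc_sq {t : F} (ht : t ≠ 0) : χc t * χc t = 1 := by
  have := quadraticChar_sq_one ht
  simp only [χc, ← sq]
  exact_mod_cast congrArg (fun n : ℤ => (n:ℂ)) this

lemma χc_abs {t : F} (ht : t ≠ 0) : ‖χc t‖ = 1 := by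
  rcases quadraticChar_dichotomy ht with h | h <;> simp [χc, h]

lemma χc_ne {t : F} (ht : t ≠ 0) : χc t ≠ 0 := by
  intro h; have := χc_abs ht; rw [h] at this; simp at this

lemma χc_sum (hF2 : ringChar F ≠ 2) : ∑ t : F, χc t = 0 := by
  have := quadraticChar_sum_zero hF2
  simp only [χc]
  exact_mod_cast congrArg (fun n : ℤ => (n : ℂ)) (by exact_mod_cast this)

lemma χc_inv {t : F} (ht : t ≠ 0) : χc t⁻¹ = χc t := by
  have h1 : χc t⁻¹ * χc t = 1 := by
    rw [← χc_mul, inv_mul_cancel₀ ht]; simp [χc]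
  have h2 : χc t * χc t = 1 := χc_sq ht
  have := mul_right_cancel₀ (χc_ne ht) (h1.trans h2.symm)
  exact this

variable (ψ : AddChar F ℂ)

lemma psi_sum (hψ : ψ ≠ 1) (b : F) :
    ∑ x : F, ψ (x * b) = if b = 0 then (Fintype.card F : ℂ) else 0 := by
  have := AddChar.sum_mulShift b (AddChar.IsPrimitive.of_ne_one hψ)
  exact_mod_cast this

lemma psi_sum' (hψ : ψ ≠ 1) (b : F) :
    ∑ x : F, ψ (b * x) = if b = 0 then (Fintype.card F : ℂ) else 0 := by
  simp_rw [mul_comm b]; exact psi_sum ψ hψ b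

noncomputable def K (c : F) : ℂ := ∑ s : F, χc s * ψ (c * s)

lemma K_zero (hF2 : ringChar F ≠ 2) : K ψ 0 = 0 := by
  simp only [K, zero_mul, AddChar.map_zero_eq_one, mul_one]
  exact χc_sum hF2

lemma K_mul {c : F} (hc : c ≠ 0) : K ψ c = χc c * K ψ 1 := by
  have key : χc c * K ψ c = K ψ 1 := by
    rw [K, mul_sum]
    have hbij : Function.Bijective (fun s : F => c * s) :=
      (Equiv.mulLeft₀ c hc).bijective
    have := Fintype.sum_bijective (fun s : F => c * s) hbij
      (fun s => χc c * (χc s * ψ (c * s))) (fun u => χc u * ψ (1 * u))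
      (by intro s; simp only [one_mul, χc_mul]; ring)
    rw [this]; simp only [K, one_mul]
  calc K ψ c = (χc c * χc c) * K ψ c := by rw [χc_sq hc, one_mul]
  _ = χc c * K ψ 1 := by rw [mul_assoc, key]

lemma K_norm (hF2 : ringChar F ≠ 2) (hψ : ψ ≠ 1) :
    K ψ 1 * (starRingEnd ℂ) (K ψ 1) = (Fintype.card F : ℂ) := by
  have hconj : (starRingEnd ℂ) (K ψ 1) = ∑ r : F, χc r * ψ (-r) := by
    rw [K, map_sum]
    refine Finset.sum_congr rfl fun r _ => ?_
    rw [map_mul, one_mul, ← AddChar.map_neg_eq_conj]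
    congr 1
    simp only [χc]
    exact map_intCast (starRingEnd ℂ) _
  have key : ∀ r : F, χc r * ψ (-r) * K ψ 1 = ∑ s : F, χc s * ψ (r * (s - 1)) := by
    intro r
    by_cases hr : r = 0
    · subst hr
      simp only [χc_zero, zero_mul, neg_zero, mul_zero, zero_mul]
      rw [eq_comm]
      simp only [zero_mul, AddChar.map_zero_eq_one, mul_one]
      exact (χc_sum hF2)
    · have hK1 : K ψ 1 = χc r * K ψ r := by
        rw [K_mul ψ hr, ← mul_assoc, χc_sq hr, one_mul]
      rw [hK1]
      have h2 : χc r * ψ (-r) * (χc r * K ψ r) = (χc r * χc r) * (ψ (-r) * K ψ r) := by ring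
      rw [h2, χc_sq hr, one_mul, K, mul_sum]
      refine Finset.sum_congr rfl fun s _ => ?_
      rw [← mul_assoc, mul_comm (ψ (-r)) (χc s), mul_assoc, ← AddChar.map_add_eq_mul]
      congr 2
      ring
  calc K ψ 1 * (starRingEnd ℂ) (K ψ 1) = ∑ r : F, χc r * ψ (-r) * K ψ 1 := by
        rw [hconj, Finset.mul_sum]; refine Finset.sum_congr rfl fun r _ => ?_; ring
  _ = ∑ r : F, ∑ s : F, χc s * ψ (r * (s - 1)) := Finset.sum_congr rfl fun r _ => key r
  _ = ∑ s : F, χc s * ∑ r : F, ψ (r * (s - 1)) := by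
        rw [Finset.sum_comm]
        refine Finset.sum_congr rfl fun s _ => ?_
        rw [mul_sum]
  _ = (Fintype.card F : ℂ) := by
        have hterm : ∀ s : F, χc s * ∑ r : F, ψ (r * (s - 1))
            = if s = (1:F) then χc (1:F) * (Fintype.card F : ℂ) else 0 := by
          intro s
          rw [psi_sum ψ hψ (s - 1)]
          by_cases hs : s = 1
          · have h1 : s - 1 = 0 := by rw [hs, sub_self]
            rw [if_pos h1, if_pos hs, hs]
          · have h0 : ¬ (s - 1 = 0) := fun h => hs (by linear_combination h)
            rw [if_neg h0, if_neg hs, mul_zero]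
        rw [Finset.sum_congr rfl fun s _ => hterm s, Finset.sum_ite_eq' univ (1:F)]
        simp [χc]

lemma K_abs (hF2 : ringChar F ≠ 2) (hψ : ψ ≠ 1) :
    ‖K ψ 1‖ = Real.sqrt (Fintype.card F) := by
  have h := K_norm ψ hF2 hψ
  rw [Complex.mul_conj] at h
  have hsq : Complex.normSq (K ψ 1) = (Fintype.card F : ℝ) := by
    exact_mod_cast h
  rw [Complex.norm_def, hsq]

lemma K_abs_le (hF2 : ringChar F ≠ 2) (hψ : ψ ≠ 1) (c : F) :
    ‖K ψ c‖ ≤ Real.sqrt (Fintype.card F) := by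
  by_cases hc : c = 0
  · rw [hc, K_zero ψ hF2]; simp [Real.sqrt_nonneg]
  · rw [K_mul ψ hc, norm_mul, χc_abs hc, one_mul, K_abs ψ hF2 hψ]

lemma sum_sq (hF2 : ringChar F ≠ 2) (hψ : ψ ≠ 1) {α : F} (hα : α ≠ 0) :
    ∑ w : F, ψ (α * w ^ 2) = K ψ α := by
  have count : ∀ y : F, ((univ.filter (fun w : F => w ^ 2 = y)).card : ℂ)
      = 1 + χc y := by
    intro y
    have := quadraticChar_card_sqrts hF2 y
    rw [Set.toFinset_setOf] at this
    calc ((univ.filter (fun w : F => w ^ 2 = y)).card : ℂ)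
        = (((quadraticChar F y : ℤ) + 1 : ℤ) : ℂ) := by exact_mod_cast congrArg (fun n : ℤ => (n : ℂ)) this
    _ = 1 + χc y := by rw [χc]; push_cast; ring
  calc ∑ w : F, ψ (α * w ^ 2)
      = ∑ y ∈ univ.image (fun w : F => w ^ 2),
          ((univ.filter (fun w : F => w ^ 2 = y)).card : ℂ) * ψ (α * y) := by
        rw [Finset.sum_comp (fun y => ψ (α * y)) (fun w : F => w ^ 2)]
        simp [nsmul_eq_mul]
  _ = ∑ y : F, ((univ.filter (fun w : F => w ^ 2 = y)).card : ℂ) * ψ (α * y) := by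
        refine Finset.sum_subset (subset_univ _) ?_
        intro y _ hy
        have : (univ.filter (fun w : F => w ^ 2 = y)).card = 0 := by
          rw [Finset.card_eq_zero, Finset.filter_eq_empty_iff]
          intro w _
          intro hw
          exact hy (Finset.mem_image.mpr ⟨w, mem_univ w, hw⟩)
        rw [this]; simp
  _ = ∑ y : F, ψ (α * y) + ∑ y : F, χc y * ψ (α * y) := by
        rw [← Finset.sum_add_distrib]
        refine Finset.sum_congr rfl fun y _ => ?_
        rw [count y]; ring
  _ = K ψ α := by
        rw [psi_sum' ψ hψ α, if_neg hα, zero_add, K]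

lemma gauss_eval (hF2 : ringChar F ≠ 2) (hψ : ψ ≠ 1) {α : F} (hα : α ≠ 0) (β : F) :
    ∑ ζ : F, ψ (α * ζ ^ 2 + β * ζ) = ψ (-(β ^ 2 * (4 * α)⁻¹)) * K ψ α := by
  have h2 : (2 : F) ≠ 0 := Ring.two_ne_zero hF2
  have h4 : (4 : F) ≠ 0 := by
    have : (4 : F) = 2 * 2 := by norm_num
    rw [this]; exact mul_ne_zero h2 h2
  have hshift : ∑ ζ : F, ψ (α * ζ ^ 2 + β * ζ)
      = ∑ w : F, ψ (α * w ^ 2 + -(β ^ 2 * (4 * α)⁻¹)) := by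
    refine (Fintype.sum_equiv (Equiv.subRight (β * (2 * α)⁻¹))
      (fun w => ψ (α * w ^ 2 + -(β ^ 2 * (4 * α)⁻¹)))
      (fun ζ => ψ (α * ζ ^ 2 + β * ζ)) ?_).symm
    intro w
    have harg : α * (w - β * (2*α)⁻¹) ^ 2 + β * (w - β * (2*α)⁻¹)
        = α * w ^ 2 + -(β ^ 2 * (4*α)⁻¹) := by
      field_simp
      ring
    simp only [Equiv.subRight_apply]
    rw [harg]
  rw [hshift]
  have : ∀ w : F, ψ (α * w ^ 2 + -(β ^ 2 * (4 * α)⁻¹))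
      = ψ (-(β ^ 2 * (4 * α)⁻¹)) * ψ (α * w ^ 2) := by
    intro w
    rw [← AddChar.map_add_eq_mul]; congr 1; ring
  rw [Finset.sum_congr rfl fun w _ => this w, ← Finset.mul_sum, sum_sq ψ hF2 hψ hα]

def ηp (ζ t : F) : Fin 3 → F := ![ζ, t, ζ ^ 2 * t⁻¹]
def lp (s : F) : Fin 3 → F := ![0, 0, s]

noncomputable def hh (ψ : AddChar F ℂ) : (Fin 3 → F) → ℂ := fun x =>
  (∑ ζ : F, ∑ t : F, χc t * ψ (∑ i, x i * ηp ζ t i))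
  + ∑ s : F, χc s * ψ (∑ i, x i * lp s i)

lemma dot_eta (x : Fin 3 → F) (ζ t : F) :
    ∑ i, x i * ηp ζ t i = x 0 * ζ + x 1 * t + x 2 * (ζ ^ 2 * t⁻¹) := by
  simp [ηp, Fin.sum_univ_three]

lemma dot_l (x : Fin 3 → F) (s : F) : ∑ i, x i * lp s i = x 2 * s := by
  simp [lp, Fin.sum_univ_three]

lemma hh_eval₀ (hF2 : ringChar F ≠ 2) (hψ : ψ ≠ 1) (x : Fin 3 → F) (hx2 : x 2 = 0) :
    hh ψ x = (if x 0 = 0 then (Fintype.card F : ℂ) else 0) * K ψ (x 1) := by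
  rw [hh]
  have hline : ∑ s : F, χc s * ψ (∑ i, x i * lp s i) = 0 := by
    have : ∀ s : F, χc s * ψ (∑ i, x i * lp s i) = χc s := by
      intro s; rw [dot_l, hx2, zero_mul, AddChar.map_zero_eq_one, mul_one]
    rw [Finset.sum_congr rfl fun s _ => this s]
    exact χc_sum hF2
  rw [hline, add_zero]
  have hmain : ∀ ζ t : F, χc t * ψ (∑ i, x i * ηp ζ t i)
      = ψ (x 0 * ζ) * (χc t * ψ (x 1 * t)) := by
    intro ζ t
    rw [dot_eta, hx2, zero_mul, add_zero, AddChar.map_add_eq_mul]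
    ring
  simp_rw [hmain]
  rw [← Finset.sum_mul_sum, psi_sum' ψ hψ (x 0)]
  rfl

lemma hh_eval₂ (hF2 : ringChar F ≠ 2) (hψ : ψ ≠ 1) (x : Fin 3 → F) (hx2 : x 2 ≠ 0) :
    hh ψ x = χc (x 2) * K ψ 1 *
      (if x 1 - (x 0) ^ 2 * (4 * x 2)⁻¹ = 0 then (Fintype.card F : ℂ) else 0) := by
  have h2 : (2 : F) ≠ 0 := Ring.two_ne_zero hF2
  have h4 : (4 : F) ≠ 0 := by
    have : (4 : F) = 2 * 2 := by norm_num
    rw [this]; exact mul_ne_zero h2 h2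
  set c : F := x 1 - (x 0) ^ 2 * (4 * x 2)⁻¹ with hc
  have hline : ∑ s : F, χc s * ψ (∑ i, x i * lp s i) = K ψ (x 2) := by
    rw [K]; exact Finset.sum_congr rfl fun s _ => by rw [dot_l]
  have hterm : ∀ t : F, ∑ ζ : F, χc t * ψ (∑ i, x i * ηp ζ t i)
      = χc (x 2) * K ψ 1 * ψ (c * t) - (if t = 0 then χc (x 2) * K ψ 1 else 0) := by
    intro t
    by_cases ht : t = 0
    · subst ht
      simp only [χc_zero, zero_mul, Finset.sum_const_zero, if_pos rfl,
        AddChar.map_zero_eq_one, mul_zero, mul_one]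
      simp
    · rw [if_neg ht, sub_zero]
      set α : F := x 2 * t⁻¹ with hα
      have hαne : α ≠ 0 := mul_ne_zero hx2 (inv_ne_zero ht)
      have hsplit : ∀ ζ : F, χc t * ψ (∑ i, x i * ηp ζ t i)
          = (χc t * ψ (x 1 * t)) * ψ (α * ζ ^ 2 + x 0 * ζ) := by
        intro ζ
        rw [dot_eta, mul_assoc]
        congr 1
        rw [← AddChar.map_add_eq_mul]
        congr 1
        rw [hα]; ring
      rw [Finset.sum_congr rfl fun ζ _ => hsplit ζ, ← Finset.mul_sum,
        gauss_eval ψ hF2 hψ hαne (x 0), K_mul ψ hαne]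
      have hχ : χc t * χc α = χc (x 2) := by
        rw [hα, χc_mul, χc_inv ht, ← mul_assoc, mul_comm (χc t) (χc (x 2)),
          mul_assoc, χc_sq ht, mul_one]
      have hψarg : ψ (x 1 * t) * ψ (-((x 0) ^ 2 * (4 * α)⁻¹)) = ψ (c * t) := by
        rw [← AddChar.map_add_eq_mul]
        congr 1
        rw [hα, hc]
        field_simp
        ring
      calc χc t * ψ (x 1 * t) * (ψ (-((x 0) ^ 2 * (4 * α)⁻¹)) * (χc α * K ψ 1))
          = (χc t * χc α) * (ψ (x 1 * t) * ψ (-((x 0) ^ 2 * (4 * α)⁻¹))) * K ψ 1 := by ring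
      _ = χc (x 2) * K ψ 1 * ψ (c * t) := by rw [hχ, hψarg]; ring
  rw [hh, hline, Finset.sum_comm]
  rw [Finset.sum_congr rfl fun t _ => hterm t]
  rw [Finset.sum_sub_distrib, Finset.sum_ite_eq' univ (0:F), ← Finset.mul_sum,
    psi_sum' ψ hψ c, K_mul ψ hx2]
  simp only [mem_univ, if_pos]
  ring

def bad (F : Type) [Field F] [Fintype F] [DecidableEq F] : Finset (Fin 3 → F) :=
  univ.filter (fun x => (x 2 ≠ 0 ∧ x 1 - (x 0) ^ 2 * (4 * x 2)⁻¹ = 0) ∨ (x 2 = 0 ∧ x 0 = 0))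

lemma hh_vanish (hF2 : ringChar F ≠ 2) (hψ : ψ ≠ 1) (x : Fin 3 → F) (hx : x ∉ bad F) :
    hh ψ x = 0 := by
  rw [bad, Finset.mem_filter] at hx
  push_neg at hx
  have hx' := hx (mem_univ x)
  by_cases hx2 : x 2 = 0
  · rw [hh_eval₀ ψ hF2 hψ x hx2, if_neg (hx'.2 hx2), zero_mul]
  · rw [hh_eval₂ ψ hF2 hψ x hx2, if_neg (hx'.1 hx2), mul_zero]

lemma hh_abs_le (hF2 : ringChar F ≠ 2) (hψ : ψ ≠ 1) (x : Fin 3 → F) :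
    ‖hh ψ x‖ ≤ (Fintype.card F : ℝ) * Real.sqrt (Fintype.card F) := by
  have hq0 : (0:ℝ) ≤ (Fintype.card F : ℝ) := Nat.cast_nonneg _
  by_cases hx2 : x 2 = 0
  · rw [hh_eval₀ ψ hF2 hψ x hx2, norm_mul]
    have h1 : ‖if x 0 = 0 then (Fintype.card F : ℂ) else 0‖ ≤ (Fintype.card F : ℝ) := by
      split_ifs
      · rw [Complex.norm_natCast]
      · simp [hq0]
    exact mul_le_mul h1 (K_abs_le ψ hF2 hψ (x 1)) (norm_nonneg _) hq0
  · rw [hh_eval₂ ψ hF2 hψ x hx2, norm_mul, norm_mul, χc_abs hx2, one_mul]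
    have h1 : ‖if x 1 - (x 0) ^ 2 * (4 * x 2)⁻¹ = 0 then (Fintype.card F : ℂ) else 0‖
        ≤ (Fintype.card F : ℝ) := by
      split_ifs
      · rw [Complex.norm_natCast]
      · simp [hq0]
    calc ‖K ψ 1‖ * ‖if x 1 - (x 0) ^ 2 * (4 * x 2)⁻¹ = 0
          then (Fintype.card F : ℂ) else 0‖
        ≤ Real.sqrt (Fintype.card F) * (Fintype.card F : ℝ) :=
          mul_le_mul (K_abs_le ψ hF2 hψ 1) h1 (norm_nonneg _) (Real.sqrt_nonneg _)
    _ = (Fintype.card F : ℝ) * Real.sqrt (Fintype.card F) := mul_comm _ _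

lemma bad_card : (bad F).card ≤ Fintype.card F ^ 2 + Fintype.card F := by
  have hsub : bad F ⊆
      (univ.filter (fun x : Fin 3 → F => x 2 ≠ 0 ∧ x 1 - (x 0) ^ 2 * (4 * x 2)⁻¹ = 0)) ∪
      (univ.filter (fun x : Fin 3 → F => x 2 = 0 ∧ x 0 = 0)) := by
    intro x hx
    rw [bad, Finset.mem_filter] at hx
    rw [Finset.mem_union, Finset.mem_filter, Finset.mem_filter]
    rcases hx.2 with h | h
    · exact Or.inl ⟨hx.1, h⟩
    · exact Or.inr ⟨hx.1, h⟩
  refine le_trans (Finset.card_le_card hsub) (le_trans (Finset.card_union_le _ _) ?_)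
  have key1 : (univ.filter (fun x : Fin 3 → F => x 2 ≠ 0 ∧ x 1 - (x 0) ^ 2 * (4 * x 2)⁻¹ = 0)).card
      ≤ (univ : Finset (F × F)).card := by
    refine Finset.card_le_card_of_injOn (fun x : Fin 3 → F => (x 0, x 2))
      (fun x _ => mem_univ _) ?_
    intro x hx y hy hxy
    rw [Finset.mem_coe, Finset.mem_filter] at hx hy
    have h0 : x 0 = y 0 := congrArg Prod.fst hxy
    have h2 : x 2 = y 2 := congrArg Prod.snd hxy
    have h1 : x 1 = y 1 := by
      have ex : x 1 = (x 0) ^ 2 * (4 * x 2)⁻¹ := by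
        have := hx.2.2; linear_combination this
      have ey : y 1 = (y 0) ^ 2 * (4 * y 2)⁻¹ := by
        have := hy.2.2; linear_combination this
      rw [ex, ey, h0, h2]
    funext i
    fin_cases i <;> assumption
  have h1 : (univ.filter (fun x : Fin 3 → F => x 2 ≠ 0 ∧ x 1 - (x 0) ^ 2 * (4 * x 2)⁻¹ = 0)).card
      ≤ Fintype.card F ^ 2 := by
    calc _ ≤ (univ : Finset (F × F)).card := key1
    _ = Fintype.card F ^ 2 := by rw [Finset.card_univ, Fintype.card_prod, sq]
  have key2 : (univ.filter (fun x : Fin 3 → F => x 2 = 0 ∧ x 0 = 0)).card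
      ≤ (univ : Finset F).card := by
    refine Finset.card_le_card_of_injOn (fun x : Fin 3 → F => x 1)
      (fun x _ => mem_univ _) ?_
    intro x hx y hy hxy
    rw [Finset.mem_coe, Finset.mem_filter] at hx hy
    funext i
    fin_cases i
    · exact hx.2.2.trans hy.2.2.symm
    · exact hxy
    · exact hx.2.1.trans hy.2.1.symm
  have h2 : (univ.filter (fun x : Fin 3 → F => x 2 = 0 ∧ x 0 = 0)).card ≤ Fintype.card F := by
    calc _ ≤ (univ : Finset F).card := key2
    _ = Fintype.card F := Finset.card_univ
  exact add_le_add h1 h2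

lemma sum_x (hψ : ψ ≠ 1) (d : Fin 3 → F) :
    ∑ x : Fin 3 → F, ψ (∑ i, x i * d i)
      = ∏ i : Fin 3, (if d i = 0 then (Fintype.card F : ℂ) else 0) := by
  have h1 : ∀ x : Fin 3 → F, ψ (∑ i, x i * d i) = ∏ i : Fin 3, ψ (x i * d i) := by
    intro x
    rw [Fin.sum_univ_three, Fin.prod_univ_three, AddChar.map_add_eq_mul, AddChar.map_add_eq_mul]
  rw [Finset.sum_congr rfl fun x _ => h1 x]
  have h2 : ∏ i : Fin 3, ∑ y : F, ψ (y * d i)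
      = ∑ x ∈ Fintype.piFinset (fun _ : Fin 3 => (univ : Finset F)), ∏ i : Fin 3, ψ (x i * d i) :=
    Finset.prod_univ_sum _ _
  rw [Fintype.piFinset_univ] at h2
  rw [← h2]
  exact Finset.prod_congr rfl fun i _ => psi_sum ψ hψ (d i)

lemma point_sum (hψ : ψ ≠ 1) (v w : Fin 3 → F) :
    ∑ x : Fin 3 → F, ψ (∑ i, x i * v i) * ψ (-(∑ i, x i * w i))
      = if v = w then (Fintype.card F : ℂ) ^ 3 else 0 := by
  have h1 : ∀ x : Fin 3 → F, ψ (∑ i, x i * v i) * ψ (-(∑ i, x i * w i))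
      = ψ (∑ i, x i * (v - w) i) := by
    intro x
    rw [← AddChar.map_add_eq_mul]
    congr 1
    rw [← sub_eq_add_neg, ← Finset.sum_sub_distrib]
    exact Finset.sum_congr rfl fun i _ => by rw [Pi.sub_apply, mul_sub]
  rw [Finset.sum_congr rfl fun x _ => h1 x, sum_x ψ hψ]
  by_cases hvw : v = w
  · subst hvw
    simp
  · rw [if_neg hvw]
    obtain ⟨i, hi⟩ := Function.ne_iff.mp hvw
    refine Finset.prod_eq_zero (mem_univ i) ?_
    rw [if_neg]
    simpa [Pi.sub_apply, sub_eq_zero] using hi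

lemma fourier_expand (ξ : Fin 3 → F) :
    fourierT ψ (hh ψ) ξ
      = (∑ ζ : F, ∑ t : F, χc t *
          ∑ x : Fin 3 → F, ψ (∑ i, x i * ηp ζ t i) * ψ (-(∑ i, x i * ξ i)))
        + ∑ s : F, χc s *
          ∑ x : Fin 3 → F, ψ (∑ i, x i * lp s i) * ψ (-(∑ i, x i * ξ i)) := by
  rw [fourierT]
  simp only [hh, add_mul, Finset.sum_add_distrib]
  congr 1
  · simp only [Finset.sum_mul]
    rw [Finset.sum_comm]
    refine Finset.sum_congr rfl fun ζ _ => ?_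
    rw [Finset.sum_comm]
    refine Finset.sum_congr rfl fun t _ => ?_
    rw [Finset.mul_sum]
    exact Finset.sum_congr rfl fun x _ => by ring
  · simp only [Finset.sum_mul]
    rw [Finset.sum_comm]
    refine Finset.sum_congr rfl fun s _ => ?_
    rw [Finset.mul_sum]
    exact Finset.sum_congr rfl fun x _ => by ring

lemma fourier_abs (hψ : ψ ≠ 1) (ξ : Fin 3 → F) (hξ : ξ ∈ cone F) :
    ‖fourierT ψ (hh ψ) ξ‖ = (Fintype.card F : ℝ) ^ 3 := by
  rw [cone, Finset.mem_filter] at hξ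
  have hξc := hξ.2.1
  have hξne := hξ.2.2
  rw [fourier_expand]
  have hps : ∀ v : Fin 3 → F, ∑ x : Fin 3 → F, ψ (∑ i, x i * v i) * ψ (-(∑ i, x i * ξ i))
      = if v = ξ then (Fintype.card F : ℂ) ^ 3 else 0 := fun v => point_sum ψ hψ v ξ
  by_cases h1 : ξ 1 = 0
  · have h0 : ξ 0 = 0 := by
      have : (ξ 0) ^ 2 = 0 := by rw [← hξc, h1, zero_mul]
      exact pow_eq_zero_iff (by norm_num) |>.mp this
    have h2 : ξ 2 ≠ 0 := by
      intro h2
      exact hξne (funext fun i => by fin_cases i <;> assumption)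
    have hA : (∑ ζ : F, ∑ t : F, χc t *
        ∑ x : Fin 3 → F, ψ (∑ i, x i * ηp ζ t i) * ψ (-(∑ i, x i * ξ i))) = 0 := by
      refine Finset.sum_eq_zero fun ζ _ => Finset.sum_eq_zero fun t _ => ?_
      by_cases ht : t = 0
      · rw [ht, χc_zero, zero_mul]
      · rw [hps, if_neg, mul_zero]
        intro he
        exact ht (by rw [← h1]; exact congrFun he 1)
    have hB : (∑ s : F, χc s *
        ∑ x : Fin 3 → F, ψ (∑ i, x i * lp s i) * ψ (-(∑ i, x i * ξ i)))
        = χc (ξ 2) * (Fintype.card F : ℂ) ^ 3 := by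
      have hlp : lp (ξ 2) = ξ := by
        funext i
        fin_cases i
        · simpa [lp] using h0.symm
        · simpa [lp] using h1.symm
        · simp [lp]
      rw [Finset.sum_congr rfl fun s _ => by rw [hps]]
      rw [Finset.sum_eq_single (ξ 2)]
      · rw [if_pos hlp]
      · intro s _ hs
        rw [if_neg, mul_zero]
        intro he
        exact hs (congrFun he 2)
      · intro habs; exact absurd (mem_univ _) habs
    rw [hA, hB, zero_add, norm_mul, χc_abs h2, one_mul, norm_pow, Complex.norm_natCast]
  · have hA : (∑ ζ : F, ∑ t : F, χc t *
        ∑ x : Fin 3 → F, ψ (∑ i, x i * ηp ζ t i) * ψ (-(∑ i, x i * ξ i)))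
        = χc (ξ 1) * (Fintype.card F : ℂ) ^ 3 := by
      rw [Finset.sum_eq_single (ξ 0)]
      · rw [Finset.sum_eq_single (ξ 1)]
        · rw [hps, if_pos]
          exact funext fun i => by
            fin_cases i
            · rfl
            · rfl
            · show (ξ 0) ^ 2 * (ξ 1)⁻¹ = ξ 2
              field_simp
              linear_combination -hξc
        · intro t _ ht
          rw [hps, if_neg, mul_zero]
          intro he
          exact ht (congrFun he 1)
        · intro habs; exact absurd (mem_univ _) habs
      · intro ζ _ hζ
        refine Finset.sum_eq_zero fun t _ => ?_
        rw [hps, if_neg, mul_zero]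
        intro he
        exact hζ (congrFun he 0)
      · intro habs; exact absurd (mem_univ _) habs
    have hB : (∑ s : F, χc s *
        ∑ x : Fin 3 → F, ψ (∑ i, x i * lp s i) * ψ (-(∑ i, x i * ξ i))) = 0 := by
      refine Finset.sum_eq_zero fun s _ => ?_
      rw [hps, if_neg, mul_zero]
      intro he
      exact h1 ((congrFun he 1).symm)
    rw [hA, hB, add_zero, norm_mul, χc_abs h1, one_mul, norm_pow, Complex.norm_natCast]

lemma cone_mem : (![0, 0, (1:F)] : Fin 3 → F) ∈ cone F := by
  rw [cone, Finset.mem_filter]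
  refine ⟨mem_univ _, by norm_num, ?_⟩
  intro h
  have := congrFun h 2
  simp at this

lemma cone_card_ne : ((cone F).card : ℝ) ≠ 0 := by
  have : (cone F).Nonempty := ⟨_, cone_mem⟩
  exact_mod_cast Finset.card_ne_zero_of_mem cone_mem

lemma surf_ge (hψ : ψ ≠ 1) (a : ℝ≥0∞) (ha : 1 ≤ a) :
    (Fintype.card F : ℝ) ^ (3:ℕ) ≤ surfNormE a (cone F) (fourierT ψ (hh ψ)) := by
  by_cases hat : a = ⊤
  · rw [surfNormE, if_pos hat]
    have hb : BddAbove (Set.range fun ξ : Fin 3 → F =>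
        ⨆ _ : ξ ∈ cone F, ‖fourierT ψ (hh ψ) ξ‖) :=
      Set.Finite.bddAbove (Set.finite_range _)
    have h := le_ciSup hb (![0, 0, (1:F)] : Fin 3 → F)
    rw [ciSup_pos cone_mem, fourier_abs ψ hψ _ cone_mem] at h
    exact h
  · rw [surfNormE, if_neg hat]
    have hta0 : (0:ℝ) < a.toReal := by
      have h1 : (1:ℝ) ≤ a.toReal := by
        rw [← ENNReal.toReal_one]
        exact ENNReal.toReal_mono hat ha
      linarith
    have hQ3 : (0:ℝ) ≤ (Fintype.card F : ℝ) ^ (3:ℕ) := by positivity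
    have hsum : ∑ ξ ∈ cone F, ‖fourierT ψ (hh ψ) ξ‖ ^ a.toReal
        = ((cone F).card : ℝ) * ((Fintype.card F : ℝ) ^ (3:ℕ)) ^ a.toReal := by
      rw [Finset.sum_congr rfl fun ξ hξ => by rw [fourier_abs ψ hψ ξ hξ]]
      rw [Finset.sum_const, nsmul_eq_mul]
    rw [hsum, ← mul_assoc, inv_mul_cancel₀ cone_card_ne, one_mul, one_div,
      Real.rpow_rpow_inv hQ3 (ne_of_gt hta0)]

lemma amb_le (hF2 : ringChar F ≠ 2) (hψ : ψ ≠ 1) (b : ℝ≥0∞) (hb : 1 ≤ b) :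
    ambNormE b (hh ψ) ≤ 2 * (Fintype.card F : ℝ) ^ ((3:ℝ)/2 + 2 / b.toReal) := by
  have hQ0 : (0:ℝ) < (Fintype.card F : ℝ) := by
    exact_mod_cast Fintype.card_pos
  have hQ1 : (1:ℝ) ≤ (Fintype.card F : ℝ) := by
    exact_mod_cast Fintype.card_pos
  have h32 : (Fintype.card F : ℝ) * Real.sqrt (Fintype.card F)
      = (Fintype.card F : ℝ) ^ ((3:ℝ)/2) := by
    have he : ((3:ℝ)/2) = 1 + 1/2 := by norm_num
    rw [he, Real.rpow_add hQ0, Real.rpow_one, ← Real.sqrt_eq_rpow]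
  by_cases hbt : b = ⊤
  · rw [ambNormE, if_pos hbt]
    have hs : (⨆ x : Fin 3 → F, ‖hh ψ x‖)
        ≤ (Fintype.card F : ℝ) ^ ((3:ℝ)/2) :=
      ciSup_le fun x => (hh_abs_le ψ hF2 hψ x).trans_eq h32
    refine le_trans hs ?_
    rw [hbt, ENNReal.toReal_top, div_zero, add_zero]
    have := Real.rpow_nonneg (le_of_lt hQ0) ((3:ℝ)/2)
    linarith
  · have htb1 : (1:ℝ) ≤ b.toReal := by
      rw [← ENNReal.toReal_one]
      exact ENNReal.toReal_mono hbt hb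
    have htb0 : (0:ℝ) < b.toReal := by linarith
    rw [ambNormE, if_neg hbt]
    have hsum : ∑ x : Fin 3 → F, ‖hh ψ x‖ ^ b.toReal
        ≤ 2 * (Fintype.card F : ℝ) ^ ((2:ℝ) + 3/2 * b.toReal) := by
      have heq : ∑ x : Fin 3 → F, ‖hh ψ x‖ ^ b.toReal
          = ∑ x ∈ bad F, ‖hh ψ x‖ ^ b.toReal := by
        refine (Finset.sum_subset (Finset.subset_univ _) ?_).symm
        intro x _ hx
        rw [hh_vanish ψ hF2 hψ x hx, norm_zero, Real.zero_rpow (ne_of_gt htb0)]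
      rw [heq]
      have hle : ∑ x ∈ bad F, ‖hh ψ x‖ ^ b.toReal
          ≤ (bad F).card • ((Fintype.card F : ℝ) ^ ((3:ℝ)/2)) ^ b.toReal := by
        refine Finset.sum_le_card_nsmul _ _ _ fun x _ => ?_
        have h1 := hh_abs_le ψ hF2 hψ x
        rw [h32] at h1
        exact Real.rpow_le_rpow (norm_nonneg _) h1 (le_of_lt htb0)
      refine le_trans hle ?_
      rw [nsmul_eq_mul, ← Real.rpow_mul (le_of_lt hQ0)]
      have hcard : ((bad F).card : ℝ) ≤ 2 * (Fintype.card F : ℝ) ^ (2:ℝ) := by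
        have h1 : ((bad F).card : ℝ) ≤ (Fintype.card F : ℝ)^(2:ℕ) + (Fintype.card F : ℝ) := by
          exact_mod_cast bad_card (F := F)
        have h2 : (Fintype.card F : ℝ) ≤ (Fintype.card F : ℝ)^(2:ℕ) := by
          calc (Fintype.card F : ℝ) = 1 * (Fintype.card F : ℝ) := (one_mul _).symm
          _ ≤ (Fintype.card F : ℝ) * (Fintype.card F : ℝ) :=
              mul_le_mul_of_nonneg_right hQ1 (le_of_lt hQ0)
          _ = (Fintype.card F : ℝ)^(2:ℕ) := (sq _).symm
        have h3 : (Fintype.card F : ℝ)^(2:ℕ) = (Fintype.card F : ℝ)^(2:ℝ) := by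
          rw [← Real.rpow_natCast (Fintype.card F : ℝ) 2]
          norm_num
        calc ((bad F).card : ℝ) ≤ (Fintype.card F : ℝ)^(2:ℕ) + (Fintype.card F : ℝ) := h1
        _ ≤ (Fintype.card F : ℝ)^(2:ℕ) + (Fintype.card F : ℝ)^(2:ℕ) := by linarith
        _ = 2 * (Fintype.card F : ℝ) ^ (2:ℝ) := by rw [h3]; ring
      calc ((bad F).card : ℝ) * (Fintype.card F : ℝ) ^ ((3:ℝ)/2 * b.toReal)
          ≤ (2 * (Fintype.card F : ℝ) ^ (2:ℝ)) * (Fintype.card F : ℝ) ^ ((3:ℝ)/2 * b.toReal) :=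
            mul_le_mul_of_nonneg_right hcard (Real.rpow_nonneg (le_of_lt hQ0) _)
      _ = 2 * (Fintype.card F : ℝ) ^ ((2:ℝ) + 3/2 * b.toReal) := by
            rw [mul_assoc, ← Real.rpow_add hQ0]
    have hsum0 : (0:ℝ) ≤ ∑ x : Fin 3 → F, ‖hh ψ x‖ ^ b.toReal :=
      Finset.sum_nonneg fun x _ => Real.rpow_nonneg (norm_nonneg _) _
    calc (∑ x : Fin 3 → F, ‖hh ψ x‖ ^ b.toReal) ^ (1 / b.toReal)
        ≤ (2 * (Fintype.card F : ℝ) ^ ((2:ℝ) + 3/2 * b.toReal)) ^ (1 / b.toReal) :=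
          Real.rpow_le_rpow hsum0 hsum (by positivity)
    _ = (2:ℝ) ^ (1 / b.toReal) *
          ((Fintype.card F : ℝ) ^ ((2:ℝ) + 3/2 * b.toReal)) ^ (1 / b.toReal) :=
          Real.mul_rpow (by norm_num) (Real.rpow_nonneg (le_of_lt hQ0) _)
    _ = (2:ℝ) ^ (1 / b.toReal) *
          (Fintype.card F : ℝ) ^ (((2:ℝ) + 3/2 * b.toReal) * (1 / b.toReal)) := by
          rw [← Real.rpow_mul (le_of_lt hQ0)]
    _ ≤ 2 * (Fintype.card F : ℝ) ^ ((3:ℝ)/2 + 2 / b.toReal) := by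
          have he : ((2:ℝ) + 3/2 * b.toReal) * (1 / b.toReal) = (3:ℝ)/2 + 2 / b.toReal := by
            field_simp
            ring
          rw [he]
          have h2le : (2:ℝ) ^ (1 / b.toReal) ≤ 2 := by
            have hstep : (2:ℝ) ^ (1 / b.toReal) ≤ (2:ℝ) ^ (1:ℝ) := by
              exact Real.rpow_le_rpow_of_exponent_le (by norm_num) ((div_le_one htb0).mpr htb1)
            rwa [Real.rpow_one] at hstep
          exact mul_le_mul_of_nonneg_right h2le (Real.rpow_nonneg (le_of_lt hQ0) _)

end S9

theorem statement9 :
    ∃ c : ℝ, 0 < c ∧ ∀ (F : Type) [Field F] [Fintype F] [DecidableEq F],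
      ringChar F ≠ 2 →
      ∀ (ψ : AddChar F ℂ), (∃ a, ψ a ≠ 1) →
      ∀ (a b : ℝ≥0∞), 1 ≤ a → 1 ≤ b →
      ∀ (C : ℝ), 0 ≤ C →
      (∀ f : (Fin 3 → F) → ℂ, surfNormE a (cone F) (fourierT ψ f) ≤ C * ambNormE b f) →
      c * (Fintype.card F : ℝ) ^ ((3 : ℝ) / 2 - 2 / b.toReal) ≤ C := by
  refine ⟨1/2, by norm_num, ?_⟩
  intro F _ _ _ hF2 ψ hψex a b ha hb C hC hbound
  have hψ : ψ ≠ 1 := by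
    obtain ⟨a0, ha0⟩ := hψex
    intro h
    rw [h] at ha0
    exact ha0 (AddChar.one_apply a0)
  have hQ0 : (0:ℝ) < (Fintype.card F : ℝ) := by exact_mod_cast Fintype.card_pos
  have h3 := S9.surf_ge ψ hψ a ha
  have h4 := hbound (S9.hh ψ)
  have h5 := S9.amb_le ψ hF2 hψ b hb
  have h6 : (Fintype.card F : ℝ) ^ (3:ℕ)
      ≤ C * (2 * (Fintype.card F : ℝ) ^ ((3:ℝ)/2 + 2 / b.toReal)) :=
    le_trans h3 (le_trans h4 (mul_le_mul_of_nonneg_left h5 hC))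
  have hkey : (Fintype.card F : ℝ) ^ (3:ℕ)
      = (Fintype.card F : ℝ) ^ ((3:ℝ)/2 - 2 / b.toReal)
        * (Fintype.card F : ℝ) ^ ((3:ℝ)/2 + 2 / b.toReal) := by
    rw [← Real.rpow_add hQ0, ← Real.rpow_natCast (Fintype.card F : ℝ) 3]
    norm_num
  have hpos : (0:ℝ) < (Fintype.card F : ℝ) ^ ((3:ℝ)/2 + 2 / b.toReal) :=
    Real.rpow_pos_of_pos hQ0 _
  rw [hkey] at h6
  have h7 : (Fintype.card F : ℝ) ^ ((3:ℝ)/2 - 2 / b.toReal) ≤ 2 * C := by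
    have := le_of_mul_le_mul_right (by linarith [h6] : (Fintype.card F : ℝ) ^ ((3:ℝ)/2 - 2 / b.toReal) * (Fintype.card F : ℝ) ^ ((3:ℝ)/2 + 2 / b.toReal) ≤ (2 * C) * (Fintype.card F : ℝ) ^ ((3:ℝ)/2 + 2 / b.toReal)) hpos
    exact this
  linarith
end
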